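/- arXiv:2404.18194 — 4 statements merged into one kernel-verified Lean document; each statement's English description precedes it below -/
import Mathlib

section
/- Let (z_k)_{k≥1} be a sequence of i.i.d. real random variables with mean ε₀, variance ν > 0, finite fourth moment, and Var[(z₁ − ε₀)²] ≠ 0. For each d ≥ 1 write z⁽ᵈ⁾ = (z₁,…,z_d) ∈ ℝᵈ and μ⁽ᵈ⁾ = (ε₀,…,ε₀) ∈ ℝᵈ. Then ‖z⁽ᵈ⁾ − μ⁽ᵈ⁾‖ = √(νd) + O_P(1) as d → ∞; explicitly, for every ε > 0 there exist a constant C > 0 and M ∈ ℕ such that for all d > M, ℙ( |‖z⁽ᵈ⁾ − μ⁽ᵈ⁾‖ − √(νd)| ≤ C ) ≥ 1 − ε. -/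
open MeasureTheory ProbabilityTheory

/-- Let `(Z k)` be an i.i.d. sequence of real random variables with common law
`ρ`, mean `ε₀`, variance `ν > 0`, finite fourth moment, and `Var[(z₁ - ε₀)²] ≠ 0`.  Then the
Euclidean norm `‖z⁽ᵈ⁾ - μ⁽ᵈ⁾‖ = √(∑_{k<d} (Z k - ε₀)²)` satisfies
`‖z⁽ᵈ⁾ - μ⁽ᵈ⁾‖ = √(νd) + O_P(1)` as `d → ∞`. -/
theorem norm_sub_mean_eq_sqrt_nu_d_add_OP_one
    {Ω : Type*} [MeasurableSpace Ω] (μ : Measure Ω) [IsProbabilityMeasure μ]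
    (Z : ℕ → Ω → ℝ) (ρ : Measure ℝ) (ε₀ ν : ℝ) (hν : 0 < ν)
    (hmeas : ∀ k, Measurable (Z k))
    (hindep : iIndepFun Z μ)
    (hlaw : ∀ k, μ.map (Z k) = ρ)
    (hmean : ∫ t, t ∂ρ = ε₀)
    (hvar : variance id ρ = ν)
    (hL4 : MemLp id 4 ρ)
    (hvar4 : variance (fun t => (t - ε₀) ^ 2) ρ ≠ 0) :
    ∀ ε > (0 : ℝ), ∃ C > (0 : ℝ), ∃ M : ℕ, ∀ d > M,
      ENNReal.ofReal (1 - ε) ≤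
        μ {ω | |Real.sqrt (∑ k ∈ Finset.range d, (Z k ω - ε₀) ^ 2)
          - Real.sqrt (ν * d)| ≤ C} := by
  have hρ : IsProbabilityMeasure ρ := by
    rw [← hlaw 0]; exact Measure.isProbabilityMeasure_map (hmeas 0).aemeasurable
  set g : ℝ → ℝ := fun t => (t - ε₀) ^ 2 with hgdef
  have hg_meas : Measurable g := (measurable_id.sub_const ε₀).pow_const 2
  have hsub : MemLp (fun t => t - ε₀) 4 ρ := by
    have := hL4.sub (memLp_const ε₀)
    exact this
  have hg2 : MemLp g 2 ρ := by
    have h4 : (1 : ENNReal) / 2 = 1 / 4 + 1 / 4 := by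
      rw [show (4 : ENNReal) = 2 * 2 by norm_num]
      simp only [one_div]
      rw [ENNReal.mul_inv (Or.inl (by norm_num)) (Or.inl (by norm_num)),
        ← add_mul, ENNReal.inv_two_add_inv_two, one_mul]
    have : ENNReal.HolderTriple 4 4 2 := ⟨by simpa only [one_div] using h4.symm⟩
    have h := hsub.smul (r := 2) hsub
    have : ((fun t => t - ε₀) • fun t : ℝ => t - ε₀) = g := by
      ext t; simp [hgdef, pow_two]
    rwa [this] at h
  have hidmem : MemLp id 2 ρ := hL4.mono_exponent (by norm_num)
  have hidmean : ∫ t, id t ∂ρ = ε₀ := hmean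
  have hgmean : ∫ t, g t ∂ρ = ν := by
    rw [← hvar, variance_eq_integral measurable_id.aemeasurable, hidmean]
    simp [hgdef]
  -- the squared variables
  set Y : ℕ → Ω → ℝ := fun k ω => g (Z k ω) with hYdef
  have hY_meas : ∀ k, Measurable (Y k) := fun k => hg_meas.comp (hmeas k)
  have hint : ∀ (h : ℝ → ℝ), Measurable h → ∀ k,
      ∫ ω, h (Z k ω) ∂μ = ∫ t, h t ∂ρ := by
    intro h hh k
    rw [← hlaw k, integral_map (hmeas k).aemeasurable hh.aestronglyMeasurable]
  have hYmem : ∀ k, MemLp (Y k) 2 μ := by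
    intro k
    have : MemLp g 2 (μ.map (Z k)) := by rw [hlaw k]; exact hg2
    exact this.comp_of_map (hmeas k).aemeasurable
  have hYmean : ∀ k, ∫ ω, Y k ω ∂μ = ν := fun k => (hint g hg_meas k).trans hgmean
  have hYvar : ∀ k, variance (Y k) μ = variance g ρ := by
    intro k
    rw [variance_eq_sub (hYmem k), variance_eq_sub hg2]
    have h1 : ∫ ω, (Y k ^ 2) ω ∂μ = ∫ t, (g ^ 2) t ∂ρ := by
      have := hint (fun t => g t ^ 2) (hg_meas.pow_const 2) k
      simpa [Pi.pow_apply] using this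
    have h2 : ∫ ω, Y k ω ∂μ = ∫ t, g t ∂ρ := hint g hg_meas k
    rw [h1, h2]
  set σ2 : ℝ := variance g ρ with hσ2def
  have hσ2pos : 0 < σ2 := lt_of_le_of_ne (variance_nonneg g ρ) (Ne.symm hvar4)
  have hindepY : iIndepFun Y μ :=
    hindep.comp (fun _ => g) (fun _ => hg_meas)
  intro ε hε
  set C₀ : ℝ := Real.sqrt (σ2 / ε) + 1 with hC₀def
  have hC₀pos : 0 < C₀ := by positivity
  have hC₀ε : σ2 / C₀ ^ 2 ≤ ε := by
    have h1 : Real.sqrt (σ2 / ε) ^ 2 = σ2 / ε := Real.sq_sqrt (by positivity)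
    rw [div_le_iff₀ (by positivity)]
    have h2 : Real.sqrt (σ2 / ε) ≥ 0 := Real.sqrt_nonneg _
    have h3 : σ2 = ε * (σ2 / ε) := by field_simp
    have h5 : σ2 / ε ≤ C₀ ^ 2 := by nlinarith [hC₀def, h1, h2]
    calc σ2 = ε * (σ2 / ε) := h3
      _ ≤ ε * C₀ ^ 2 := mul_le_mul_of_nonneg_left h5 hε.le
  refine ⟨C₀ / Real.sqrt ν, by positivity, 0, ?_⟩
  intro d hd
  have hd1 : (1 : ℝ) ≤ d := by exact_mod_cast hd
  have hdpos : (0 : ℝ) < d := lt_of_lt_of_le one_pos hd1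
  set F : Ω → ℝ := ∑ i ∈ Finset.range d, Y i with hFdef
  have hFmem : MemLp F 2 μ := memLp_finset_sum' _ (fun i _ => hYmem i)
  have hFapp : ∀ ω, F ω = ∑ k ∈ Finset.range d, (Z k ω - ε₀) ^ 2 := by
    intro ω; simp [hFdef, Finset.sum_apply, hYdef, hgdef]
  have hFmean : ∫ ω, F ω ∂μ = ν * d := by
    have : ∫ ω, F ω ∂μ = ∑ i ∈ Finset.range d, ∫ ω, Y i ω ∂μ := by
      simp only [hFdef, Finset.sum_apply]
      exact integral_finset_sum _ (fun i _ => (hYmem i).integrable one_le_two)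
    rw [this]
    simp [hYmean, mul_comm]
  have hFvar : variance F μ = d * σ2 := by
    rw [IndepFun.variance_sum (fun i _ => hYmem i)
      (fun i _ j _ hij => hindepY.indepFun hij)]
    simp [hYvar, hσ2def]
  -- Chebyshev
  have hcpos : 0 < C₀ * Real.sqrt d := by positivity
  have hcheb := meas_ge_le_variance_div_sq (μ := μ) hFmem hcpos
  have hvd : variance F μ / (C₀ * Real.sqrt d) ^ 2 = σ2 / C₀ ^ 2 := by
    rw [hFvar, mul_pow, Real.sq_sqrt hdpos.le]
    field_simp
  rw [hvd, hFmean] at hcheb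
  -- set inclusion
  have hsub2 : {ω | C₀ * Real.sqrt d ≤ |F ω - ν * d|}ᶜ ⊆
      {ω | |Real.sqrt (∑ k ∈ Finset.range d, (Z k ω - ε₀) ^ 2)
          - Real.sqrt (ν * d)| ≤ C₀ / Real.sqrt ν} := by
    intro ω hω
    simp only [Set.mem_compl_iff, Set.mem_setOf_eq, not_le] at hω
    simp only [Set.mem_setOf_eq, ← hFapp ω]
    have hF0 : 0 ≤ F ω := by
      rw [hFapp]; exact Finset.sum_nonneg (fun k _ => sq_nonneg _)
    have hνd : 0 < ν * d := by positivity
    have hsνd : 0 < Real.sqrt (ν * d) := Real.sqrt_pos.2 hνd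
    have key : |Real.sqrt (F ω) - Real.sqrt (ν * d)| * Real.sqrt (ν * d) ≤
        |F ω - ν * d| := by
      have h1 : Real.sqrt (ν * d) ≤ Real.sqrt (F ω) + Real.sqrt (ν * d) := by
        have := Real.sqrt_nonneg (F ω); linarith
      have hnn : (0 : ℝ) ≤ Real.sqrt (F ω) + Real.sqrt (ν * d) := by positivity
      have habs : |Real.sqrt (F ω) - Real.sqrt (ν * d)| *
          (Real.sqrt (F ω) + Real.sqrt (ν * d)) = |F ω - ν * d| := by
        rw [← abs_of_nonneg hnn, ← abs_mul]
        congr 1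
        have e1 : Real.sqrt (F ω) ^ 2 = F ω := Real.sq_sqrt hF0
        have e2 : Real.sqrt (ν * d) ^ 2 = ν * d := Real.sq_sqrt hνd.le
        calc (Real.sqrt (F ω) - Real.sqrt (ν * d)) *
            (Real.sqrt (F ω) + Real.sqrt (ν * d))
            = Real.sqrt (F ω) ^ 2 - Real.sqrt (ν * d) ^ 2 := by ring
          _ = F ω - ν * d := by rw [e1, e2]
      rw [← habs]
      exact mul_le_mul_of_nonneg_left h1 (abs_nonneg _)
    have hsplit : Real.sqrt (ν * d) = Real.sqrt ν * Real.sqrt d :=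
      Real.sqrt_mul hν.le _
    have hsν : 0 < Real.sqrt ν := Real.sqrt_pos.2 hν
    have hsd : 0 < Real.sqrt d := Real.sqrt_pos.2 hdpos
    rw [← le_div_iff₀ hsνd] at key
    calc |Real.sqrt (F ω) - Real.sqrt (ν * d)| ≤ |F ω - ν * d| / Real.sqrt (ν * d) := key
      _ ≤ C₀ * Real.sqrt d / (Real.sqrt ν * Real.sqrt d) := by
          rw [hsplit]
          gcongr
      _ = C₀ / Real.sqrt ν := by field_simp
  -- measurability of the Chebyshev bad set
  have hFmeas : Measurable F := by
    have h := Finset.measurable_sum (Finset.range d) (fun i (_ : i ∈ Finset.range d) => hY_meas i)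
    convert h using 1
    ext ω; simp [hFdef, Finset.sum_apply]
  have hBmeas : MeasurableSet {ω | C₀ * Real.sqrt d ≤ |F ω - ν * d|} := by
    apply measurableSet_le measurable_const
    exact ((hFmeas.sub_const _).abs)
  calc ENNReal.ofReal (1 - ε) ≤ 1 - ENNReal.ofReal ε := by
        rcases le_or_gt ε 1 with h | h
        · refine ENNReal.le_sub_of_add_le_right ENNReal.ofReal_ne_top ?_
          rw [← ENNReal.ofReal_add (by linarith) hε.le]
          simp
        · simp [ENNReal.ofReal_eq_zero.2 (by linarith : 1 - ε ≤ 0)]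
    _ ≤ 1 - μ {ω | C₀ * Real.sqrt d ≤ |F ω - ν * d|} := by
        exact tsub_le_tsub_left (hcheb.trans (ENNReal.ofReal_le_ofReal hC₀ε)) 1
    _ = μ {ω | C₀ * Real.sqrt d ≤ |F ω - ν * d|}ᶜ :=
        (prob_compl_eq_one_sub hBmeas).symm
    _ ≤ _ := measure_mono hsub2
end

section
/- In the HDLSS setting, the observed point cloud satisfies: for every i ∈ [n], ‖x_i'‖ = √(νd) + O_P(1) as d → ∞; for all distinct i, j ∈ [n], ‖x_i' − x_j'‖ = √(2νd) + O_P(1) as d → ∞; and for all distinct i, j ∈ [n], ⟨x_i', x_j'⟩ / (‖x_i'‖·‖x_j'‖) = O_P(d^{−1/2}) as d → ∞ (with the convention that the ratio equals 0 when a denominator vanishes). -/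
open MeasureTheory ProbabilityTheory Finset
open scoped ENNReal NNReal

namespace HDLSSAux

variable {Ω : Type*} [MeasurableSpace Ω] {μ : Measure Ω}

lemma pow4_add_le (u v : ℝ) : (u + v)^4 ≤ 8*u^4 + 8*v^4 := by
  nlinarith [sq_nonneg (u - v), sq_nonneg (u + v), sq_nonneg (u^2 - v^2), sq_nonneg (u^2 + v^2),
    sq_nonneg u, sq_nonneg v]

lemma abs_sqrt_sub_sqrt_le {S m : ℝ} (hS : 0 ≤ S) (hm : 0 < m) :
    |Real.sqrt S - Real.sqrt m| ≤ |S - m| / Real.sqrt m := by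
  rw [le_div_iff₀ (Real.sqrt_pos.mpr hm)]
  have h1 : |Real.sqrt S - Real.sqrt m| * Real.sqrt m
      ≤ |Real.sqrt S - Real.sqrt m| * (Real.sqrt S + Real.sqrt m) := by
    apply mul_le_mul_of_nonneg_left _ (abs_nonneg _)
    nlinarith [Real.sqrt_nonneg S]
  have h3 : (Real.sqrt S - Real.sqrt m) * (Real.sqrt S + Real.sqrt m) = S - m := by
    have := Real.sq_sqrt hS
    have := Real.sq_sqrt hm.le
    nlinarith
  calc |Real.sqrt S - Real.sqrt m| * Real.sqrt m
      ≤ |Real.sqrt S - Real.sqrt m| * (Real.sqrt S + Real.sqrt m) := h1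
    _ = |(Real.sqrt S - Real.sqrt m) * (Real.sqrt S + Real.sqrt m)| := by
        rw [abs_mul, abs_of_nonneg (show (0:ℝ) ≤ Real.sqrt S + Real.sqrt m by positivity)]
    _ = |S - m| := by rw [h3]

lemma sum_dev_le (a : ℕ → ℝ) (A : ℝ) (s : ℕ) (h : ∀ k, s ≤ k → a k = A) (d : ℕ) :
    |(∑ k ∈ range d, a k) - A * d| ≤ ∑ k ∈ range s, |a k - A| := by
  have h1 : (∑ k ∈ range d, a k) - A * d = ∑ k ∈ range d, (a k - A) := by
    rw [Finset.sum_sub_distrib, Finset.sum_const, Finset.card_range, nsmul_eq_mul]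
    ring
  rw [h1]
  refine (Finset.abs_sum_le_sum_abs _ _).trans ?_
  have h2 : ∑ k ∈ range d, |a k - A| = ∑ k ∈ range (min d s), |a k - A| := by
    refine (Finset.sum_subset (Finset.range_subset_range.mpr (min_le_left _ _)) ?_).symm
    intro k hk hk2
    simp only [Finset.mem_range] at hk hk2
    have : s ≤ k := by omega
    simp [h k this]
  rw [h2]
  exact Finset.sum_le_sum_of_subset_of_nonneg (Finset.range_subset_range.mpr (min_le_right _ _))
    (fun k _ _ => abs_nonneg _)

lemma good_of_bad (μ : Measure Ω) [IsProbabilityMeasure μ] {G B : Set Ω}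
    (h : ∀ ω, ω ∉ B → ω ∈ G) {ε : ℝ} (hε : 0 ≤ ε) (hB : μ B ≤ ENNReal.ofReal ε) :
    ENNReal.ofReal (1 - ε) ≤ μ G := by
  have h1 : (1 : ℝ≥0∞) ≤ μ G + ENNReal.ofReal ε := by
    calc (1:ℝ≥0∞) = μ Set.univ := measure_univ.symm
    _ ≤ μ (G ∪ B) := measure_mono (fun ω _ => by
        by_cases hω : ω ∈ B
        · exact Or.inr hω
        · exact Or.inl (h ω hω))
    _ ≤ μ G + μ B := measure_union_le _ _
    _ ≤ μ G + ENNReal.ofReal ε := by gcongr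
  have h2 : ENNReal.ofReal (1 - ε) = 1 - ENNReal.ofReal ε := by
    rw [ENNReal.ofReal_sub _ hε, ENNReal.ofReal_one]
  rw [h2]
  exact tsub_le_iff_right.mpr h1

lemma half_eq_quarter_add : (1:ℝ≥0∞)/2 = 1/4 + 1/4 := by
  rw [ENNReal.div_add_div_same,
    ENNReal.div_eq_div_iff (by norm_num) (by norm_num) (by norm_num) (by norm_num)]
  norm_num

lemma memℒp_sq_of_memℒp4 {f : Ω → ℝ} (hf : MemLp f 4 μ) :
    MemLp (fun ω => (f ω)^2) 2 μ := by
  have h := hf.smul (φ := f) hf (r := 2)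
    (hpqr := ⟨by simpa only [one_div] using half_eq_quarter_add.symm⟩)
  simpa [Pi.smul_apply', smul_eq_mul, pow_two, Pi.mul_def] using h

lemma memℒp_mul_of_memℒp4 {f g : Ω → ℝ} (hf : MemLp f 4 μ) (hg : MemLp g 4 μ) :
    MemLp (fun ω => f ω * g ω) 2 μ := by
  have h := hg.smul (φ := f) hf (r := 2)
    (hpqr := ⟨by simpa only [one_div] using half_eq_quarter_add.symm⟩)
  simpa [Pi.smul_apply', smul_eq_mul, Pi.mul_def] using h


lemma core_cheb (μ : Measure Ω) [IsProbabilityMeasure μ]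
    (f : ℕ → Ω → ℝ) (s : ℕ) (A W : ℝ)
    (hmem : ∀ k, MemLp (f k) 2 μ)
    (hind : ∀ k l, k ≠ l → IndepFun (f k) (f l) μ)
    (hmean : ∀ k, s ≤ k → ∫ ω, f k ω ∂μ = A)
    (hvar : ∀ k, variance (f k) μ ≤ W)
    {ε : ℝ} (hε : 0 < ε) :
    ∃ C > (0:ℝ), ∀ d : ℕ, 1 ≤ d →
      μ {ω | C * Real.sqrt d < |(∑ k ∈ range d, f k ω) - A * d|} ≤ ENNReal.ofReal ε := by
  have hW : 0 ≤ W := le_trans (variance_nonneg (f 0) μ) (hvar 0)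
  set c0 : ℝ := ∑ k ∈ range s, |(∫ ω, f k ω ∂μ) - A| with hc0
  have hc0nn : 0 ≤ c0 := Finset.sum_nonneg fun _ _ => abs_nonneg _
  set C1 : ℝ := Real.sqrt (W / ε) + 1 with hC1
  have hC1pos : 0 < C1 := by positivity
  refine ⟨C1 + c0, by positivity, fun d hd => ?_⟩
  have hd0 : (0:ℝ) < (d:ℝ) := by exact_mod_cast hd
  have hdpos : (0:ℝ) < Real.sqrt d := Real.sqrt_pos.mpr hd0
  have hd1 : (1:ℝ) ≤ Real.sqrt d := by
    rw [show (1:ℝ) = Real.sqrt 1 by simp]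
    exact Real.sqrt_le_sqrt (by exact_mod_cast hd)
  have hSmem : MemLp (∑ k ∈ range d, f k) 2 μ := memLp_finset_sum' (range d) (fun k _ => hmem k)
  have hmean_dev : |(∫ ω, (∑ k ∈ range d, f k) ω ∂μ) - A * d| ≤ c0 := by
    have h1 : ∫ ω, (∑ k ∈ range d, f k) ω ∂μ = ∑ k ∈ range d, ∫ ω, f k ω ∂μ := by
      simp only [Finset.sum_apply]
      exact integral_finset_sum _ fun k _ => (hmem k).integrable one_le_two
    rw [h1]
    exact sum_dev_le _ A s (fun k hk => hmean k hk) d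
  have hvarsum : variance (∑ k ∈ range d, f k) μ ≤ W * d := by
    have h1 : variance (∑ k ∈ range d, f k) μ = ∑ k ∈ range d, variance (f k) μ :=
      IndepFun.variance_sum (fun k _ => hmem k) (fun k _ l _ hkl => hind k l hkl)
    rw [h1]
    calc ∑ k ∈ range d, variance (f k) μ ≤ ∑ k ∈ range d, W :=
        Finset.sum_le_sum fun k _ => hvar k
    _ = W * d := by simp [mul_comm]
  have hcheb := meas_ge_le_variance_div_sq (μ := μ) hSmem
    (c := C1 * Real.sqrt d) (by positivity)
  have hbound : variance (∑ k ∈ range d, f k) μ / (C1 * Real.sqrt d)^2 ≤ ε := by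
    have h2 : (C1 * Real.sqrt d)^2 = C1^2 * d := by
      rw [mul_pow, Real.sq_sqrt (Nat.cast_nonneg d)]
    rw [h2, div_le_iff₀ (by positivity)]
    have hC1sq : W / ε ≤ C1 ^ 2 := by
      have h4 := Real.sq_sqrt (div_nonneg hW hε.le)
      nlinarith [Real.sqrt_nonneg (W / ε)]
    have h5 : W ≤ ε * C1^2 := by
      rw [div_le_iff₀ hε] at hC1sq; linarith [hC1sq]
    calc variance (∑ k ∈ range d, f k) μ ≤ W * d := hvarsum
    _ ≤ ε * C1^2 * d := by nlinarith
    _ = ε * (C1^2 * d) := by ring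
  refine le_trans (measure_mono ?_) (le_trans hcheb (ENNReal.ofReal_le_ofReal hbound))
  intro ω hω
  simp only [Set.mem_setOf_eq, Finset.sum_apply] at hω hmean_dev ⊢
  have htri := abs_sub_le ((∑ k ∈ range d, f k ω)) (∫ x, ∑ k ∈ range d, f k x ∂μ) (A * d)
  have hc0d : c0 ≤ c0 * Real.sqrt d := le_mul_of_one_le_right hc0nn hd1
  have hexp : (C1 + c0) * Real.sqrt d = C1 * Real.sqrt d + c0 * Real.sqrt d := by ring
  have hkey : |(∑ k ∈ range d, f k ω) - A * d|
      ≤ |(∑ k ∈ range d, f k ω) - ∫ x, ∑ k ∈ range d, f k x ∂μ| + c0 := by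
    refine htri.trans ?_
    gcongr
  linarith [hkey, hω]

lemma sqrt_cheb (μ : Measure Ω) [IsProbabilityMeasure μ]
    (f : ℕ → Ω → ℝ) (s : ℕ) (A W : ℝ) (hA : 0 < A)
    (hnn : ∀ k ω, 0 ≤ f k ω)
    (hmem : ∀ k, MemLp (f k) 2 μ)
    (hind : ∀ k l, k ≠ l → IndepFun (f k) (f l) μ)
    (hmean : ∀ k, s ≤ k → ∫ ω, f k ω ∂μ = A)
    (hvar : ∀ k, variance (f k) μ ≤ W)
    {ε : ℝ} (hε : 0 < ε) :
    ∃ C > (0:ℝ), ∀ d : ℕ, 1 ≤ d →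
      μ {ω | C < |Real.sqrt (∑ k ∈ range d, f k ω) - Real.sqrt (A * d)|}
        ≤ ENNReal.ofReal ε := by
  obtain ⟨C0, hC0, hC⟩ := core_cheb μ f s A W hmem hind hmean hvar hε
  have hsA : (0:ℝ) < Real.sqrt A := Real.sqrt_pos.mpr hA
  refine ⟨C0 / Real.sqrt A, by positivity, fun d hd => ?_⟩
  refine le_trans (measure_mono ?_) (hC d hd)
  intro ω hω
  simp only [Set.mem_setOf_eq] at hω ⊢
  by_contra hcon
  push_neg at hcon
  refine absurd hω ?_
  push_neg
  have hd0 : (0:ℝ) < (d:ℝ) := by exact_mod_cast hd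
  have hsd : (0:ℝ) < Real.sqrt d := Real.sqrt_pos.mpr hd0
  have hS : 0 ≤ ∑ k ∈ range d, f k ω := Finset.sum_nonneg fun k _ => hnn k ω
  have hAd : (0:ℝ) < A * d := mul_pos hA hd0
  calc |Real.sqrt (∑ k ∈ range d, f k ω) - Real.sqrt (A * d)|
      ≤ |(∑ k ∈ range d, f k ω) - A * d| / Real.sqrt (A * d) :=
        abs_sqrt_sub_sqrt_le hS hAd
    _ ≤ (C0 * Real.sqrt d) / Real.sqrt (A * d) := by gcongr
    _ = C0 / Real.sqrt A := by
        rw [Real.sqrt_mul hA.le]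
        field_simp

variable [IsProbabilityMeasure μ]

lemma memℒp_const_add {g : Ω → ℝ} (hg : MemLp g 4 μ) (c : ℝ) :
    MemLp (fun ω => c + g ω) 4 μ := by
  exact (memLp_const (μ := μ) c).add hg

lemma integrable_of_mem4 {g : Ω → ℝ} (hg : MemLp g 4 μ) : Integrable g μ :=
  (hg.mono_exponent (by norm_num)).integrable le_rfl

lemma integrable_sq_of_mem4 {g : Ω → ℝ} (hg : MemLp g 4 μ) :
    Integrable (fun ω => g ω ^ 2) μ :=
  (hg.mono_exponent (by norm_num : (2:ℝ≥0∞) ≤ 4)).integrable_sq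

lemma integrable_pow4 {g : Ω → ℝ} (hg : MemLp g 4 μ) :
    Integrable (fun ω => g ω ^ 4) μ := by
  have h := (memℒp_sq_of_memℒp4 hg).integrable_sq
  have hrw : (fun ω => g ω ^ 4) = fun ω => (g ω ^ 2) ^ 2 := funext fun ω => by ring
  rw [hrw]; exact h

lemma integral_const_add_sq {g : Ω → ℝ} (hg : MemLp g 4 μ) (c m1 m2 : ℝ)
    (h1 : ∫ ω, g ω ∂μ = m1) (h2 : ∫ ω, (g ω) ^ 2 ∂μ = m2) :
    ∫ ω, (c + g ω) ^ 2 ∂μ = c ^ 2 + 2 * c * m1 + m2 := by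
  have hint1 : Integrable g μ := integrable_of_mem4 hg
  have hint2 : Integrable (fun ω => g ω ^ 2) μ := integrable_sq_of_mem4 hg
  have hfun : (fun ω => (c + g ω) ^ 2) = fun ω => (c ^ 2 + 2 * c * g ω) + g ω ^ 2 :=
    funext fun ω => by ring
  have hI1 : Integrable (fun ω => c ^ 2 + 2 * c * g ω) μ :=
    (integrable_const _).add (hint1.const_mul _)
  have hI2 : Integrable (fun ω => 2 * c * g ω) μ := hint1.const_mul _
  rw [hfun, integral_add hI1 hint2, integral_add (integrable_const _) hI2, integral_const,
    integral_const_mul, h1, h2]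
  simp

lemma variance_const_add_sq_le {g : Ω → ℝ} (hg : MemLp g 4 μ) (c m4 : ℝ)
    (h4 : ∫ ω, (g ω) ^ 4 ∂μ ≤ m4) :
    variance (fun ω => (c + g ω) ^ 2) μ ≤ 8 * c ^ 4 + 8 * m4 := by
  have hca : MemLp (fun ω => c + g ω) 4 μ := memℒp_const_add hg c
  have h2 : MemLp (fun ω => (c + g ω) ^ 2) 2 μ := memℒp_sq_of_memℒp4 hca
  refine (variance_le_expectation_sq h2.aestronglyMeasurable).trans ?_
  have hint4 : Integrable (fun ω => (c + g ω) ^ 4) μ := integrable_pow4 hca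
  have hint4' : Integrable (fun ω => 8 * c ^ 4 + 8 * (g ω) ^ 4) μ :=
    (integrable_const _).add ((integrable_pow4 hg).const_mul 8)
  have heq : μ[(fun ω => (c + g ω) ^ 2) ^ 2] = ∫ ω, (c + g ω) ^ 4 ∂μ := by
    apply integral_congr_ae
    filter_upwards with ω
    simp only [Pi.pow_apply]
    ring
  rw [heq]
  calc ∫ ω, (c + g ω) ^ 4 ∂μ ≤ ∫ ω, (8 * c ^ 4 + 8 * (g ω) ^ 4) ∂μ :=
      integral_mono hint4 hint4' (fun ω => pow4_add_le c (g ω))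
  _ = 8 * c ^ 4 + 8 * ∫ ω, (g ω) ^ 4 ∂μ := by
      have hI : Integrable (fun ω => 8 * (g ω) ^ 4) μ := (integrable_pow4 hg).const_mul 8
      rw [integral_add (integrable_const _) hI, integral_const, integral_const_mul]
      simp
  _ ≤ 8 * c ^ 4 + 8 * m4 := by gcongr

lemma integral_mul_indep {a b : Ω → ℝ} (hab : IndepFun a b μ)
    (ha : Integrable a μ) (hb : Integrable b μ) :
    ∫ ω, a ω * b ω ∂μ = (∫ ω, a ω ∂μ) * ∫ ω, b ω ∂μ := by
  have h := hab.integral_mul_eq_mul_integral ha.aestronglyMeasurable hb.aestronglyMeasurable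
  simpa [Pi.mul_apply] using h

lemma integral_sub_sq {a b : Ω → ℝ} (hab : IndepFun a b μ)
    (ha : MemLp a 4 μ) (hb : MemLp b 4 μ)
    (hma : ∫ ω, a ω ∂μ = 0) (hmb : ∫ ω, b ω ∂μ = 0)
    {ν : ℝ} (hva : ∫ ω, a ω ^ 2 ∂μ = ν) (hvb : ∫ ω, b ω ^ 2 ∂μ = ν) :
    ∫ ω, (a ω - b ω) ^ 2 ∂μ = 2 * ν := by
  have hfun : (fun ω => (a ω - b ω) ^ 2) = fun ω => (a ω ^ 2 + b ω ^ 2) - 2 * (a ω * b ω) :=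
    funext fun ω => by ring
  have hintab : Integrable (fun ω => a ω * b ω) μ := by
    have := hab.integrable_mul (integrable_of_mem4 ha) (integrable_of_mem4 hb)
    exact this
  have hI1 : Integrable (fun ω => a ω ^ 2 + b ω ^ 2) μ :=
    (integrable_sq_of_mem4 ha).add (integrable_sq_of_mem4 hb)
  have hI2 : Integrable (fun ω => 2 * (a ω * b ω)) μ := hintab.const_mul 2
  rw [hfun, integral_sub hI1 hI2,
    integral_add (integrable_sq_of_mem4 ha) (integrable_sq_of_mem4 hb),
    integral_const_mul, integral_mul_indep hab (integrable_of_mem4 ha) (integrable_of_mem4 hb),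
    hma, hmb, hva, hvb]
  ring

lemma integral_sub_pow4_le {a b : Ω → ℝ}
    (ha : MemLp a 4 μ) (hb : MemLp b 4 μ) {m4 : ℝ}
    (h4a : ∫ ω, a ω ^ 4 ∂μ ≤ m4) (h4b : ∫ ω, b ω ^ 4 ∂μ ≤ m4) :
    ∫ ω, (a ω - b ω) ^ 4 ∂μ ≤ 16 * m4 := by
  have hint : Integrable (fun ω => (a ω - b ω) ^ 4) μ := by
    have := integrable_pow4 (ha.sub hb)
    simpa [Pi.sub_apply] using this
  have hint' : Integrable (fun ω => 8 * a ω ^ 4 + 8 * b ω ^ 4) μ :=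
    ((integrable_pow4 ha).const_mul 8).add ((integrable_pow4 hb).const_mul 8)
  have step1 : ∫ ω, (a ω - b ω) ^ 4 ∂μ ≤ ∫ ω, (8 * a ω ^ 4 + 8 * b ω ^ 4) ∂μ := by
    refine integral_mono hint hint' (fun ω => ?_)
    have h := pow4_add_le (a ω) (-(b ω))
    have h2 : (-(b ω)) ^ 4 = b ω ^ 4 := by ring
    rw [h2] at h
    simpa [sub_eq_add_neg] using h
  have hIa : Integrable (fun ω => 8 * a ω ^ 4) μ := (integrable_pow4 ha).const_mul 8
  have hIb : Integrable (fun ω => 8 * b ω ^ 4) μ := (integrable_pow4 hb).const_mul 8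
  have step2 : ∫ ω, (8 * a ω ^ 4 + 8 * b ω ^ 4) ∂μ
      = 8 * (∫ ω, a ω ^ 4 ∂μ) + 8 * ∫ ω, b ω ^ 4 ∂μ := by
    rw [integral_add hIa hIb, integral_const_mul, integral_const_mul]
  linarith [step1, step2.le, step2.ge]

lemma integral_mul_add_indep {a b : Ω → ℝ} (hab : IndepFun a b μ)
    (ha : MemLp a 4 μ) (hb : MemLp b 4 μ) (c c' : ℝ) :
    ∫ ω, (c + a ω) * (c' + b ω) ∂μ
      = (c + ∫ ω, a ω ∂μ) * (c' + ∫ ω, b ω ∂μ) := by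
  have hab' : IndepFun (fun ω => c + a ω) (fun ω => c' + b ω) μ :=
    hab.comp (measurable_const_add c) (measurable_const_add c')
  have h := integral_mul_indep hab' (integrable_of_mem4 (memℒp_const_add ha c))
    (integrable_of_mem4 (memℒp_const_add hb c'))
  rw [h, integral_add (integrable_const _) (integrable_of_mem4 ha),
    integral_add (integrable_const _) (integrable_of_mem4 hb)]
  simp

lemma variance_mul_add_le {a b : Ω → ℝ} (hab : IndepFun a b μ)
    (ha : MemLp a 4 μ) (hb : MemLp b 4 μ) (c c' : ℝ) :
    variance (fun ω => (c + a ω) * (c' + b ω)) μ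
      ≤ (∫ ω, (c + a ω) ^ 2 ∂μ) * ∫ ω, (c' + b ω) ^ 2 ∂μ := by
  have hca : MemLp (fun ω => c + a ω) 4 μ := memℒp_const_add ha c
  have hcb : MemLp (fun ω => c' + b ω) 4 μ := memℒp_const_add hb c'
  have h2 : MemLp (fun ω => (c + a ω) * (c' + b ω)) 2 μ := memℒp_mul_of_memℒp4 hca hcb
  refine (variance_le_expectation_sq h2.aestronglyMeasurable).trans ?_
  have hab2 : IndepFun (fun ω => (c + a ω) ^ 2) (fun ω => (c' + b ω) ^ 2) μ :=
    hab.comp (by fun_prop : Measurable (fun t : ℝ => (c + t) ^ 2))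
      (by fun_prop : Measurable (fun t : ℝ => (c' + t) ^ 2))
  have heq : μ[(fun ω => (c + a ω) * (c' + b ω)) ^ 2]
      = ∫ ω, ((c + a ω) ^ 2) * ((c' + b ω) ^ 2) ∂μ := by
    apply integral_congr_ae
    filter_upwards with ω
    simp only [Pi.pow_apply]
    ring
  rw [heq, integral_mul_indep hab2 (integrable_sq_of_mem4 hca) (integrable_sq_of_mem4 hcb)]

end HDLSSAux

open HDLSSAux

set_option maxHeartbeats 4000000 in
/-- (HDLSS geometric representation of the observed point cloud.)
With original points `x_i = (x_{1i},…,x_{si},0,…,0)` and i.i.d. noise coordinates `e_{ki}` with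
mean `0`, variance `ν > 0`, finite fourth moment and `Var[e₁₁²] ≠ 0`, the observed points
`x_i' = x_i + e_i ∈ ℝᵈ` satisfy, as `d → ∞`:
`‖x_i'‖ = √(νd) + O_P(1)`, `‖x_i' - x_j'‖ = √(2νd) + O_P(1)` for `i ≠ j`, and
`⟨x_i', x_j'⟩/(‖x_i'‖‖x_j'‖) = O_P(d^{-1/2})` for `i ≠ j` (ratio `= 0` if a denominator
vanishes, which is Lean's convention for division by zero). -/
theorem observed_point_cloud_geometric_representation
    {Ω : Type*} [MeasurableSpace Ω] (μ : Measure Ω) [IsProbabilityMeasure μ]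
    (n s : ℕ) (hn : 2 ≤ n) (hs : 1 ≤ s) (hsn : s < n)
    (x : ℕ → Fin n → ℝ) (hx : ∀ k, s ≤ k → ∀ i, x k i = 0)
    (e : ℕ → Fin n → Ω → ℝ) (ρ : Measure ℝ) (ν : ℝ) (hν : 0 < ν)
    (hmeas : ∀ k i, Measurable (e k i))
    (hindep : iIndepFun (fun p : ℕ × Fin n => e p.1 p.2) μ)
    (hlaw : ∀ k i, μ.map (e k i) = ρ)
    (hmean : ∫ t, t ∂ρ = 0)
    (hvar : variance id ρ = ν)
    (hL4 : MemLp id 4 ρ)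
    (hvar4 : variance (fun t => t ^ 2) ρ ≠ 0) :
    (∀ i : Fin n, ∀ ε > (0 : ℝ), ∃ C > (0 : ℝ), ∃ M : ℕ, ∀ d > M,
      ENNReal.ofReal (1 - ε) ≤
        μ {ω | |Real.sqrt (∑ k ∈ Finset.range d, (x k i + e k i ω) ^ 2)
          - Real.sqrt (ν * d)| ≤ C}) ∧
    (∀ i j : Fin n, i ≠ j → ∀ ε > (0 : ℝ), ∃ C > (0 : ℝ), ∃ M : ℕ, ∀ d > M,
      ENNReal.ofReal (1 - ε) ≤
        μ {ω | |Real.sqrt (∑ k ∈ Finset.range d,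
              ((x k i + e k i ω) - (x k j + e k j ω)) ^ 2)
          - Real.sqrt (2 * ν * d)| ≤ C}) ∧
    (∀ i j : Fin n, i ≠ j → ∀ ε > (0 : ℝ), ∃ C > (0 : ℝ), ∃ M : ℕ, ∀ d > M,
      ENNReal.ofReal (1 - ε) ≤
        μ {ω | |(∑ k ∈ Finset.range d, (x k i + e k i ω) * (x k j + e k j ω)) /
            (Real.sqrt (∑ k ∈ Finset.range d, (x k i + e k i ω) ^ 2) *
              Real.sqrt (∑ k ∈ Finset.range d, (x k j + e k j ω) ^ 2))|
          ≤ C / Real.sqrt d}) := by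
  classical
  -- basic facts about ρ
  have hρprob : IsProbabilityMeasure ρ := by
    rw [← hlaw 0 ⟨0, by omega⟩]
    exact Measure.isProbabilityMeasure_map (hmeas 0 ⟨0, by omega⟩).aemeasurable
  have hL2ρ : MemLp id 2 ρ := hL4.mono_exponent (by norm_num)
  have hm2ρ : ∫ t, t ^ 2 ∂ρ = ν := by
    have h := variance_eq_sub hL2ρ
    rw [hvar] at h
    simp only [Pi.pow_apply, id_eq] at h
    rw [hmean] at h
    linarith
  set m4 : ℝ := ∫ t, t ^ 4 ∂ρ with hm4def
  have hm4nn : 0 ≤ m4 := integral_nonneg (fun t => by positivity)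
  -- basic facts about e k i
  have he4 : ∀ k i, MemLp (e k i) 4 μ := fun k i => by
    have h : MemLp id 4 (μ.map (e k i)) := (hlaw k i).symm ▸ hL4
    have h2 := (memLp_map_measure_iff aestronglyMeasurable_id (hmeas k i).aemeasurable).mp h
    simpa using h2
  have hE : ∀ k i, ∫ ω, e k i ω ∂μ = 0 := fun k i => by
    have h := integral_map (μ := μ) (f := fun t : ℝ => t) (hmeas k i).aemeasurable
      measurable_id.aestronglyMeasurable
    rw [← h, hlaw k i, hmean]
  have hE2 : ∀ k i, ∫ ω, (e k i ω) ^ 2 ∂μ = ν := fun k i => by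
    have h := integral_map (μ := μ) (f := fun t : ℝ => t ^ 2) (hmeas k i).aemeasurable
      (measurable_id.pow_const 2).aestronglyMeasurable
    rw [← h, hlaw k i, hm2ρ]
  have hE4 : ∀ k i, ∫ ω, (e k i ω) ^ 4 ∂μ = m4 := fun k i => by
    have h := integral_map (μ := μ) (f := fun t : ℝ => t ^ 4) (hmeas k i).aemeasurable
      (measurable_id.pow_const 4).aestronglyMeasurable
    rw [← h, hlaw k i]
  -- independence facts
  have hpairind : ∀ (i j : Fin n), i ≠ j → ∀ k, IndepFun (e k i) (e k j) μ :=
    fun i j hij k =>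
      hindep.indepFun (show ((k, i) : ℕ × Fin n) ≠ (k, j) by simp [hij])
  have hpair2 : ∀ (i j : Fin n), i ≠ j → ∀ k l, k ≠ l →
      IndepFun (fun ω => (e k i ω, e k j ω)) (fun ω => (e l i ω, e l j ω)) μ :=
    fun i j hij k l hkl =>
      hindep.indepFun_prodMk_prodMk (fun p => hmeas p.1 p.2) (k, i) (k, j) (l, i) (l, j)
        (by simp [hkl]) (by simp [hkl]) (by simp [hkl]) (by simp [hkl])
  -- Part 1 key fact (also used in part 3)
  have key1 : ∀ i : Fin n, ∀ ε : ℝ, 0 < ε → ∃ C > (0:ℝ), ∀ d : ℕ, 1 ≤ d →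
      μ {ω | C < |Real.sqrt (∑ k ∈ Finset.range d, (x k i + e k i ω) ^ 2)
        - Real.sqrt (ν * d)|} ≤ ENNReal.ofReal ε := by
    intro i ε hε
    refine sqrt_cheb μ (fun k ω => (x k i + e k i ω) ^ 2) s ν
      (8 * (∑ k' ∈ Finset.range s, (x k' i) ^ 4) + 8 * m4) hν
      (fun k ω => sq_nonneg _)
      (fun k => memℒp_sq_of_memℒp4 (memℒp_const_add (he4 k i) (x k i)))
      (fun k l hkl => ?_) (fun k hk => ?_) (fun k => ?_) hε
    · have h := hindep.indepFun (show ((k, i) : ℕ × Fin n) ≠ (l, i) by simp [hkl])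
      exact h.comp (show Measurable (fun t : ℝ => (x k i + t) ^ 2) by fun_prop)
        (show Measurable (fun t : ℝ => (x l i + t) ^ 2) by fun_prop)
    · rw [integral_const_add_sq (he4 k i) (x k i) 0 ν (hE k i) (hE2 k i), hx k hk i]
      ring
    · have h := variance_const_add_sq_le (he4 k i) (x k i) m4 (le_of_eq (hE4 k i))
      have hx4 : (x k i) ^ 4 ≤ ∑ k' ∈ Finset.range s, (x k' i) ^ 4 := by
        by_cases hks : k < s
        · exact Finset.single_le_sum (f := fun k' => (x k' i) ^ 4)
            (fun k' _ => by positivity) (Finset.mem_range.mpr hks)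
        · push_neg at hks
          rw [hx k hks i]
          have : (0:ℝ) ≤ ∑ k' ∈ Finset.range s, (x k' i) ^ 4 :=
            Finset.sum_nonneg (fun k' _ => by positivity)
          simpa using this
      linarith
  refine ⟨?_, ?_, ?_⟩
  · -- Part 1
    intro i ε hε
    obtain ⟨C, hC, hkey⟩ := key1 i ε hε
    refine ⟨C, hC, 0, fun d hd => ?_⟩
    refine good_of_bad μ (fun ω hω => ?_) hε.le (hkey d hd)
    simp only [Set.mem_setOf_eq] at hω ⊢
    push_neg at hω
    exact hω
  · -- Part 2
    intro i j hij ε hε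
    have h2ν : 0 < 2 * ν := by linarith
    obtain ⟨C, hC, hkey⟩ := sqrt_cheb μ
      (fun k ω => ((x k i - x k j) + (e k i ω - e k j ω)) ^ 2) s (2 * ν)
      (8 * (∑ k' ∈ Finset.range s, (x k' i - x k' j) ^ 4) + 128 * m4) h2ν
      (fun k ω => sq_nonneg _)
      (fun k => memℒp_sq_of_memℒp4 (memℒp_const_add
        (show MemLp (fun ω => e k i ω - e k j ω) 4 μ from (he4 k i).sub (he4 k j))
        (x k i - x k j)))
      (fun k l hkl => by
        refine (hpair2 i j hij k l hkl).comp
          (show Measurable (fun p : ℝ × ℝ => ((x k i - x k j) + (p.1 - p.2)) ^ 2) by fun_prop)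
          (show Measurable (fun p : ℝ × ℝ => ((x l i - x l j) + (p.1 - p.2)) ^ 2) by fun_prop))
      (fun k hk => by
        have hm1 : ∫ ω, (e k i ω - e k j ω) ∂μ = 0 := by
          rw [integral_sub (integrable_of_mem4 (he4 k i)) (integrable_of_mem4 (he4 k j)),
            hE k i, hE k j]
          ring
        have hm2 : ∫ ω, (e k i ω - e k j ω) ^ 2 ∂μ = 2 * ν :=
          integral_sub_sq (hpairind i j hij k) (he4 k i) (he4 k j) (hE k i) (hE k j)
            (hE2 k i) (hE2 k j)
        rw [integral_const_add_sq
          (show MemLp (fun ω => e k i ω - e k j ω) 4 μ from (he4 k i).sub (he4 k j))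
          (x k i - x k j) 0 (2 * ν) hm1 hm2, hx k hk i, hx k hk j]
        ring)
      (fun k => by
        have h4 : ∫ ω, (e k i ω - e k j ω) ^ 4 ∂μ ≤ 16 * m4 :=
          integral_sub_pow4_le (he4 k i) (he4 k j) (le_of_eq (hE4 k i)) (le_of_eq (hE4 k j))
        have h := variance_const_add_sq_le
          (show MemLp (fun ω => e k i ω - e k j ω) 4 μ from (he4 k i).sub (he4 k j))
          (x k i - x k j) (16 * m4) h4
        have hx4 : (x k i - x k j) ^ 4 ≤ ∑ k' ∈ Finset.range s, (x k' i - x k' j) ^ 4 := by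
          by_cases hks : k < s
          · exact Finset.single_le_sum (f := fun k' => (x k' i - x k' j) ^ 4)
              (fun k' _ => by positivity) (Finset.mem_range.mpr hks)
          · push_neg at hks
            rw [hx k hks i, hx k hks j]
            have : (0:ℝ) ≤ ∑ k' ∈ Finset.range s, (x k' i - x k' j) ^ 4 :=
              Finset.sum_nonneg (fun k' _ => by positivity)
            simpa using this
        linarith) hε
    refine ⟨C, hC, 0, fun d hd => ?_⟩
    refine good_of_bad μ (fun ω hω => ?_) hε.le (hkey d hd)
    simp only [Set.mem_setOf_eq] at hω ⊢
    push_neg at hω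
    have hsum : ∑ k ∈ Finset.range d, ((x k i + e k i ω) - (x k j + e k j ω)) ^ 2
        = ∑ k ∈ Finset.range d, ((x k i - x k j) + (e k i ω - e k j ω)) ^ 2 :=
      Finset.sum_congr rfl (fun k _ => by ring)
    rw [hsum]
    exact hω
  · -- Part 3
    intro i j hij ε hε
    have hε3 : 0 < ε / 3 := by linarith
    obtain ⟨C1, hC1, hkey1⟩ := key1 i (ε / 3) hε3
    obtain ⟨C2, hC2, hkey2⟩ := key1 j (ε / 3) hε3
    obtain ⟨C3, hC3, hkey3⟩ := core_cheb μ
      (fun k ω => (x k i + e k i ω) * (x k j + e k j ω)) s 0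
      ((∑ k' ∈ Finset.range s, ((x k' i) ^ 2 + ν) * ((x k' j) ^ 2 + ν)) + ν ^ 2)
      (fun k => memℒp_mul_of_memℒp4 (memℒp_const_add (he4 k i) (x k i))
        (memℒp_const_add (he4 k j) (x k j)))
      (fun k l hkl => by
        refine (hpair2 i j hij k l hkl).comp
          (show Measurable (fun p : ℝ × ℝ => (x k i + p.1) * (x k j + p.2)) by fun_prop)
          (show Measurable (fun p : ℝ × ℝ => (x l i + p.1) * (x l j + p.2)) by fun_prop))
      (fun k hk => by
        rw [integral_mul_add_indep (hpairind i j hij k) (he4 k i) (he4 k j),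
          hE k i, hE k j, hx k hk i, hx k hk j]
        ring)
      (fun k => by
        have h := variance_mul_add_le (hpairind i j hij k) (he4 k i) (he4 k j)
          (x k i) (x k j)
        rw [integral_const_add_sq (he4 k i) (x k i) 0 ν (hE k i) (hE2 k i),
          integral_const_add_sq (he4 k j) (x k j) 0 ν (hE k j) (hE2 k j)] at h
        have hterm : ((x k i) ^ 2 + 2 * (x k i) * 0 + ν) * ((x k j) ^ 2 + 2 * (x k j) * 0 + ν)
            = ((x k i) ^ 2 + ν) * ((x k j) ^ 2 + ν) := by ring
        rw [hterm] at h
        have hx4 : ((x k i) ^ 2 + ν) * ((x k j) ^ 2 + ν)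
            ≤ (∑ k' ∈ Finset.range s, ((x k' i) ^ 2 + ν) * ((x k' j) ^ 2 + ν)) + ν ^ 2 := by
          have hsumnn : (0:ℝ) ≤ ∑ k' ∈ Finset.range s, ((x k' i) ^ 2 + ν) * ((x k' j) ^ 2 + ν) :=
            Finset.sum_nonneg (fun k' _ => by positivity)
          by_cases hks : k < s
          · have h5 : ((x k i) ^ 2 + ν) * ((x k j) ^ 2 + ν)
                ≤ ∑ k' ∈ Finset.range s, ((x k' i) ^ 2 + ν) * ((x k' j) ^ 2 + ν) :=
              Finset.single_le_sum (f := fun k' => ((x k' i) ^ 2 + ν) * ((x k' j) ^ 2 + ν))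
                (fun k' _ => by positivity) (Finset.mem_range.mpr hks)
            nlinarith
          · push_neg at hks
            rw [hx k hks i, hx k hks j]
            nlinarith
        linarith) hε3
    set Cm : ℝ := max C1 C2 with hCm
    have hCmpos : 0 < Cm := lt_max_of_lt_left hC1
    refine ⟨4 * C3 / ν, by positivity, max 1 ⌈(2 * Cm) ^ 2 / ν⌉₊, fun d hd => ?_⟩
    have hd1 : 1 ≤ d := le_of_lt (lt_of_le_of_lt (le_max_left _ _) hd)
    have hd0 : (0:ℝ) < (d:ℝ) := by exact_mod_cast hd1
    have hceil : ((2 * Cm) ^ 2 / ν : ℝ) < d := by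
      have h1 : (⌈(2 * Cm) ^ 2 / ν⌉₊ : ℝ) < d := by
        have := lt_of_le_of_lt (le_max_right 1 ⌈(2 * Cm) ^ 2 / ν⌉₊) hd
        exact_mod_cast this
      exact lt_of_le_of_lt (Nat.le_ceil _) h1
    have hsqrt2Cm : 2 * Cm < Real.sqrt (ν * d) := by
      rw [show (ν * (d:ℝ)) = ν * d by ring]
      have h2 : (2 * Cm) ^ 2 < ν * d := by
        rw [div_lt_iff₀ hν] at hceil
        nlinarith
      exact (Real.lt_sqrt (by positivity)).mpr h2
    set B1 := {ω | C1 < |Real.sqrt (∑ k ∈ Finset.range d, (x k i + e k i ω) ^ 2)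
      - Real.sqrt (ν * d)|} with hB1
    set B2 := {ω | C2 < |Real.sqrt (∑ k ∈ Finset.range d, (x k j + e k j ω) ^ 2)
      - Real.sqrt (ν * d)|} with hB2
    set B3 := {ω | C3 * Real.sqrt d
      < |(∑ k ∈ Finset.range d, (x k i + e k i ω) * (x k j + e k j ω)) - 0 * d|} with hB3
    have hBtot : μ (B1 ∪ B2 ∪ B3) ≤ ENNReal.ofReal ε := by
      calc μ (B1 ∪ B2 ∪ B3) ≤ μ (B1 ∪ B2) + μ B3 := measure_union_le _ _
      _ ≤ μ B1 + μ B2 + μ B3 := by gcongr; exact measure_union_le _ _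
      _ ≤ ENNReal.ofReal (ε / 3) + ENNReal.ofReal (ε / 3) + ENNReal.ofReal (ε / 3) := by
          gcongr
          · exact hkey1 d hd1
          · exact hkey2 d hd1
          · exact hkey3 d hd1
      _ = ENNReal.ofReal ε := by
          rw [← ENNReal.ofReal_add (by positivity) (by positivity),
            ← ENNReal.ofReal_add (by positivity) (by positivity)]
          norm_num
          rw [show ε / 3 + ε / 3 + ε / 3 = ε by ring]
    refine good_of_bad μ (fun ω hω => ?_) hε.le hBtot
    simp only [hB1, hB2, hB3, Set.mem_union, Set.mem_setOf_eq, not_or, not_lt] at hω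
    obtain ⟨⟨h1, h2⟩, h3⟩ := hω
    simp only [Set.mem_setOf_eq]
    rw [zero_mul, sub_zero] at h3
    set Si := ∑ k ∈ Finset.range d, (x k i + e k i ω) ^ 2 with hSi
    set Sj := ∑ k ∈ Finset.range d, (x k j + e k j ω) ^ 2 with hSj
    have hSinn : 0 ≤ Si := Finset.sum_nonneg fun k _ => sq_nonneg _
    have hSjnn : 0 ≤ Sj := Finset.sum_nonneg fun k _ => sq_nonneg _
    have hsd : (0:ℝ) < Real.sqrt d := Real.sqrt_pos.mpr hd0
    have hsv : (0:ℝ) < Real.sqrt (ν * d) := Real.sqrt_pos.mpr (by positivity)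
    have hSi2 : Real.sqrt (ν * d) / 2 < Real.sqrt Si := by
      have := abs_le.mp h1
      have hC1Cm : C1 ≤ Cm := le_max_left _ _
      linarith [this.1]
    have hSj2 : Real.sqrt (ν * d) / 2 < Real.sqrt Sj := by
      have := abs_le.mp h2
      have hC2Cm : C2 ≤ Cm := le_max_right _ _
      linarith [this.1]
    have hden : ν * d / 4 ≤ Real.sqrt Si * Real.sqrt Sj := by
      have h4 : Real.sqrt (ν * d) / 2 * (Real.sqrt (ν * d) / 2)
          ≤ Real.sqrt Si * Real.sqrt Sj := by
        apply mul_le_mul hSi2.le hSj2.le (by positivity) (Real.sqrt_nonneg _)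
      have h5 : Real.sqrt (ν * d) * Real.sqrt (ν * d) = ν * d :=
        Real.mul_self_sqrt (by positivity)
      nlinarith
    have hdenpos : (0:ℝ) < Real.sqrt Si * Real.sqrt Sj := by
      have : (0:ℝ) < ν * d / 4 := by positivity
      linarith
    rw [abs_div, abs_of_nonneg hdenpos.le, div_le_div_iff₀ hdenpos hsd]
    have hdd : Real.sqrt d * Real.sqrt d = d := Real.mul_self_sqrt hd0.le
    have hstep1 : |∑ k ∈ Finset.range d, (x k i + e k i ω) * (x k j + e k j ω)| * Real.sqrt d
        ≤ C3 * d := by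
      calc |∑ k ∈ Finset.range d, (x k i + e k i ω) * (x k j + e k j ω)| * Real.sqrt d
          ≤ (C3 * Real.sqrt d) * Real.sqrt d := by
            apply mul_le_mul_of_nonneg_right h3 (Real.sqrt_nonneg _)
      _ = C3 * d := by rw [mul_assoc, hdd]
    have hstep2 : C3 * d ≤ 4 * C3 / ν * (Real.sqrt Si * Real.sqrt Sj) := by
      have h6 : 4 * C3 / ν * (ν * d / 4) = C3 * d := by field_simp
      have h7 : 4 * C3 / ν * (ν * d / 4) ≤ 4 * C3 / ν * (Real.sqrt Si * Real.sqrt Sj) := by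
        apply mul_le_mul_of_nonneg_left hden (by positivity)
      linarith
    linarith
end

section
/- In the HDLSS setting, assume in addition that the common law of the noise coordinates is absolutely continuous with respect to the Lebesgue measure on ℝ. For each d let R_d = { x_1'/‖x_1'‖, …, x_n'/‖x_n'‖ } ⊆ ℝᵈ (the observed points normalized to the unit sphere; the value when some ‖x_i'‖ = 0 is irrelevant since this event is null). Then inf_{Z} d_H(R_d, col(Z)) = o_P(1) as d → ∞, where the infimum is over all real d×n matrices Z with orthonormal columns (ZᵀZ = I_n), col(Z) ⊆ ℝᵈ denotes the set of columns of Z, and d_H is the Hausdorff distance in ℝᵈ. Explicitly: for all ε > 0 and η > 0 there exists M ∈ ℕ such that for every d > M, ℙ( ∃ Z ∈ ℝ^{d×n} with ZᵀZ = I_n and d_H(R_d, col(Z)) ≤ η ) ≥ 1 − ε. -/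
open MeasureTheory ProbabilityTheory

set_option maxHeartbeats 2000000

open Filter Topology
open scoped ENNReal NNReal RealInnerProductSpace

lemma gram_perturb : ∀ (m : ℕ) (η : ℝ), 0 < η → η ≤ 1 → ∃ δ : ℝ, 0 < δ ∧ δ ≤ 1 ∧
    ∀ (d : ℕ) (v : Fin m → EuclideanSpace ℝ (Fin d)),
      (∀ i j, |⟪v i, v j⟫ - (if i = j then (1:ℝ) else 0)| ≤ δ) →
      ∃ z : Fin m → EuclideanSpace ℝ (Fin d), Orthonormal ℝ z ∧ ∀ i, ‖v i - z i‖ ≤ η := by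
  intro m
  induction m with
  | zero =>
    intro η hη _
    exact ⟨1, one_pos, le_refl 1, fun d v _ => ⟨v, ⟨fun i => i.elim0, fun i => i.elim0⟩,
      fun i => i.elim0⟩⟩
  | succ m IH =>
    intro η hη hη1
    set η₁ : ℝ := η / (16 * (m + 1)) with hη₁def
    have hη₁pos : 0 < η₁ := by positivity
    have hη₁le : η₁ ≤ 1 := by
      rw [hη₁def]
      rw [div_le_one (by positivity)]
      nlinarith [Nat.cast_nonneg (α := ℝ) m]
    obtain ⟨δ', hδ'pos, hδ'le, hδ'⟩ := IH η₁ hη₁pos hη₁le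
    refine ⟨min δ' η₁, lt_min hδ'pos hη₁pos, (min_le_left _ _).trans hδ'le, ?_⟩
    intro d v hv
    set δ : ℝ := min δ' η₁ with hδdef
    have hδη₁ : δ ≤ η₁ := min_le_right _ _
    have hδ1 : δ ≤ 1 := hδη₁.trans hη₁le
    have hδpos : 0 < δ := lt_min hδ'pos hη₁pos
    -- apply IH to the first m vectors
    obtain ⟨z₀, hz₀on, hz₀close⟩ := hδ' d (fun i => v i.castSucc) (by
      intro i j
      have := hv i.castSucc j.castSucc
      simpa [Fin.castSucc_inj] using this.trans (min_le_left _ _))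
    set u : EuclideanSpace ℝ (Fin d) := v (Fin.last m) with hudef
    have hu2 : |⟪u, u⟫ - 1| ≤ δ := by simpa using hv (Fin.last m) (Fin.last m)
    have hunorm2 : ⟪u, u⟫ = ‖u‖ ^ 2 := real_inner_self_eq_norm_sq u
    have huub : ‖u‖ ≤ 2 := by
      nlinarith [norm_nonneg u, abs_le.1 hu2]
    have hu1 : |‖u‖ - 1| ≤ δ := by
      have h1 : (‖u‖ - 1) * (‖u‖ + 1) = ‖u‖^2 - 1 := by ring
      have h2 : |‖u‖^2 - 1| ≤ δ := by rwa [hunorm2] at hu2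
      rcases abs_le.1 h2 with ⟨hl, hr⟩
      rw [abs_le]
      constructor <;> nlinarith [norm_nonneg u]
    -- coefficients
    set c : Fin m → ℝ := fun i => ⟪z₀ i, u⟫ with hcdef
    have hcbound : ∀ i, |c i| ≤ δ + 2 * η₁ := by
      intro i
      have h1 : c i = ⟪v i.castSucc, u⟫ + ⟪z₀ i - v i.castSucc, u⟫ := by
        rw [hcdef]; simp [inner_sub_left]
      have h2 : |⟪v i.castSucc, u⟫| ≤ δ := by
        have := hv i.castSucc (Fin.last m)
        have hne : i.castSucc ≠ Fin.last m := (Fin.castSucc_lt_last i).ne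
        simpa [hne] using this
      have h3 : |⟪z₀ i - v i.castSucc, u⟫| ≤ η₁ * 2 := by
        calc |⟪z₀ i - v i.castSucc, u⟫| ≤ ‖z₀ i - v i.castSucc‖ * ‖u‖ :=
              abs_real_inner_le_norm _ _
          _ ≤ η₁ * 2 := by
              apply mul_le_mul _ huub (norm_nonneg _) hη₁pos.le
              rw [norm_sub_rev]; exact hz₀close i
      rw [h1]
      calc |⟪v i.castSucc, u⟫ + ⟪z₀ i - v i.castSucc, u⟫|
          ≤ |⟪v i.castSucc, u⟫| + |⟪z₀ i - v i.castSucc, u⟫| := abs_add_le _ _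
        _ ≤ δ + 2 * η₁ := by linarith
    set w : EuclideanSpace ℝ (Fin d) := u - ∑ i, c i • z₀ i with hwdef
    have hwu : ‖w - u‖ ≤ m * (δ + 2 * η₁) := by
      have : w - u = -(∑ i, c i • z₀ i) := by rw [hwdef]; abel
      rw [this, norm_neg]
      calc ‖∑ i, c i • z₀ i‖ ≤ ∑ i, ‖c i • z₀ i‖ := norm_sum_le _ _
        _ ≤ ∑ _i : Fin m, (δ + 2 * η₁) := by
            apply Finset.sum_le_sum
            intro i _
            rw [norm_smul, hz₀on.1 i, mul_one]
            exact hcbound i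
        _ = m * (δ + 2 * η₁) := by
            rw [Finset.sum_const, Finset.card_univ, Fintype.card_fin, nsmul_eq_mul]
    have hb : m * (δ + 2 * η₁) ≤ 3 / 16 := by
      have h1 : δ + 2 * η₁ ≤ 3 * η₁ := by linarith
      have h2 : (m : ℝ) * (3 * η₁) ≤ 3 / 16 * η := by
        rw [hη₁def]
        rw [show (m : ℝ) * (3 * (η / (16 * (m+1)))) = 3 / 16 * η * (m / (m+1)) by
          field_simp]
        nlinarith [div_le_one_of_le₀ (show (m:ℝ) ≤ m + 1 by linarith)
          (by positivity : (0:ℝ) ≤ (m:ℝ)+1), hη.le,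
          mul_nonneg (by positivity : (0:ℝ) ≤ 3/16 * η)
            (by positivity : (0:ℝ) ≤ (m:ℝ)/((m:ℝ)+1))]
      calc (m:ℝ) * (δ + 2 * η₁) ≤ m * (3 * η₁) := by
            apply mul_le_mul_of_nonneg_left h1 (Nat.cast_nonneg m)
        _ ≤ 3/16 * η := h2
        _ ≤ 3/16 := by linarith
    have hδ16 : δ ≤ 1 / 16 := by
      have : η₁ ≤ η / 16 := by
        rw [hη₁def]
        apply div_le_div_of_nonneg_left hη.le (by norm_num) (by nlinarith [Nat.cast_nonneg (α := ℝ) m])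
      nlinarith
    have hwpos : (1:ℝ)/2 ≤ ‖w‖ := by
      have h1 : ‖u‖ - ‖w - u‖ ≤ ‖w‖ := by
        have := norm_sub_norm_le w u
        have h2 := abs_le.1 (abs_norm_sub_norm_le w u)
        linarith [h2.1]
      have h3 : 1 - δ ≤ ‖u‖ := by linarith [(abs_le.1 hu1).1]
      linarith
    have hwne : w ≠ 0 := by
      intro h
      rw [h, norm_zero] at hwpos
      linarith
    set zl : EuclideanSpace ℝ (Fin d) := ‖w‖⁻¹ • w with hzldef
    have hzlnorm : ‖zl‖ = 1 := by
      rw [hzldef, norm_smul, norm_inv, norm_norm, inv_mul_cancel₀ (by positivity)]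
    have hworth : ∀ i, ⟪z₀ i, w⟫ = 0 := by
      intro i
      rw [hwdef, inner_sub_right, inner_sum]
      have : ∀ j, ⟪z₀ i, c j • z₀ j⟫ = c j * (if i = j then (1:ℝ) else 0) := by
        intro j
        rw [real_inner_smul_right]
        congr 1
        exact orthonormal_iff_ite.1 hz₀on i j
      simp only [this, mul_ite, mul_one, mul_zero]
      simp [hcdef]
    -- the new family
    set z : Fin (m+1) → EuclideanSpace ℝ (Fin d) := Fin.snoc z₀ zl with hzdef
    have hzon : Orthonormal ℝ z := by
      rw [orthonormal_iff_ite]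
      intro i j
      have hzL : z (Fin.last m) = zl := Fin.snoc_last _ _
      have hzC : ∀ i : Fin m, z i.castSucc = z₀ i := fun i => Fin.snoc_castSucc _ _ i
      have hll : ⟪zl, zl⟫ = 1 := by
        rw [real_inner_self_eq_norm_sq, hzlnorm]; norm_num
      refine Fin.lastCases ?_ ?_ i
      · refine Fin.lastCases ?_ ?_ j
        · rw [hzL, hll, if_pos rfl]
        · intro j
          have h0 : ⟪zl, z₀ j⟫ = 0 := by
            rw [real_inner_comm, hzldef, real_inner_smul_right, hworth j, mul_zero]
          rw [hzL, hzC j, h0, if_neg (Fin.castSucc_lt_last j).ne']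
      · intro i
        refine Fin.lastCases ?_ ?_ j
        · have h0 : ⟪z₀ i, zl⟫ = 0 := by
            rw [hzldef, real_inner_smul_right, hworth i, mul_zero]
          rw [hzL, hzC i, h0, if_neg (Fin.castSucc_lt_last i).ne]
        · intro j
          rw [hzC i, hzC j, orthonormal_iff_ite.1 hz₀on i j]
          simp [Fin.castSucc_inj]
    refine ⟨z, hzon, ?_⟩
    intro i
    refine Fin.lastCases ?_ ?_ i
    · -- last vector
      have h1 : ‖u - zl‖ ≤ ‖u - w‖ + ‖w - zl‖ := by
        have : u - zl = (u - w) + (w - zl) := by abel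
        rw [this]; exact norm_add_le _ _
      have h2 : ‖u - w‖ ≤ m * (δ + 2 * η₁) := by rw [norm_sub_rev]; exact hwu
      have h3 : ‖w - zl‖ = |‖w‖ - 1| := by
        rw [hzldef]
        rw [show w - ‖w‖⁻¹ • w = (1 - ‖w‖⁻¹) • w by rw [sub_smul, one_smul]]
        rw [norm_smul, Real.norm_eq_abs]
        rw [show (1 - ‖w‖⁻¹) = ‖w‖⁻¹ * (‖w‖ - 1) by field_simp]
        rw [abs_mul, abs_inv, abs_norm]
        field_simp
      have h4 : |‖w‖ - 1| ≤ m * (δ + 2 * η₁) + δ := by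
        have h5 : |‖w‖ - ‖u‖| ≤ ‖w - u‖ := abs_norm_sub_norm_le w u
        have := abs_le.1 hu1
        have := abs_le.1 h5
        rw [abs_le]
        constructor <;> [nlinarith; nlinarith]
      have hfin : (2:ℝ) * (m * (δ + 2*η₁)) + δ ≤ η := by
        have hd : δ ≤ η₁ := hδη₁
        have h6 : (m:ℝ) * (δ + 2 * η₁) ≤ 3/16 * η := by
          have h1' : δ + 2 * η₁ ≤ 3 * η₁ := by linarith
          calc (m:ℝ) * (δ + 2 * η₁) ≤ m * (3 * η₁) :=
                mul_le_mul_of_nonneg_left h1' (Nat.cast_nonneg m)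
            _ ≤ 3/16 * η := by
                rw [hη₁def]
                rw [show (m : ℝ) * (3 * (η / (16 * (m+1)))) = 3 / 16 * η * (m / (m+1)) by
                  field_simp]
                nlinarith [div_le_one_of_le₀ (show (m:ℝ) ≤ m + 1 by linarith)
                  (by positivity : (0:ℝ) ≤ (m:ℝ)+1), hη.le,
                  mul_nonneg (by positivity : (0:ℝ) ≤ 3/16 * η)
                    (by positivity : (0:ℝ) ≤ (m:ℝ)/((m:ℝ)+1))]
        have h7 : η₁ ≤ η / 16 := by
          rw [hη₁def]
          apply div_le_div_of_nonneg_left hη.le (by norm_num)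
            (by nlinarith [Nat.cast_nonneg (α := ℝ) m])
        linarith
      have : v (Fin.last m) - z (Fin.last m) = u - zl := by
        rw [hzdef, hudef, Fin.snoc_last]
      rw [this]
      linarith
    · intro i
      have : v i.castSucc - z i.castSucc = v i.castSucc - z₀ i := by
        rw [hzdef, Fin.snoc_castSucc]
      rw [this]
      calc ‖v i.castSucc - z₀ i‖ ≤ η₁ := hz₀close i
        _ ≤ η := by
          rw [hη₁def]
          calc η / (16 * (m+1)) ≤ η / 1 := by
                apply div_le_div_of_nonneg_left hη.le one_pos
                nlinarith [Nat.cast_nonneg (α := ℝ) m]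
            _ = η := div_one η


lemma pair_bound {Ω : Type*} [MeasurableSpace Ω] (μ : Measure Ω) [IsProbabilityMeasure μ]
    {n : ℕ} (s : ℕ) (x : ℕ → Fin n → ℝ) (hx : ∀ k, s ≤ k → ∀ i, x k i = 0)
    (e : ℕ → Fin n → Ω → ℝ) (ρ : Measure ℝ) (ν : ℝ)
    (hmeas : ∀ k i, Measurable (e k i))
    (hindep : iIndepFun (fun p : ℕ × Fin n => e p.1 p.2) μ)
    (hlaw : ∀ k i, μ.map (e k i) = ρ)
    (hmean : ∫ t, t ∂ρ = 0)
    (hvar : variance id ρ = ν)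
    (hL4 : MemLp id 4 ρ)
    (i j : Fin n) (τ ε' : ℝ) (hτ : 0 < τ) (hε' : 0 < ε') :
    ∃ M : ℕ, ∀ d : ℕ, M ≤ d → μ {ω | τ ≤ |(∑ k ∈ Finset.range d,
      (x k i + e k i ω) * (x k j + e k j ω)) / d - (if i = j then ν else 0)|}
      ≤ ENNReal.ofReal ε' := by
  classical
  have hL4e : ∀ k i, MemLp (e k i) 4 μ := fun k i => by
    have h : MemLp id 4 (μ.map (e k i)) := (hlaw k i) ▸ hL4
    simpa using (memLp_map_measure_iff aestronglyMeasurable_id (hmeas k i).aemeasurable).1 h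
  have hL2e : ∀ k i, MemLp (e k i) 2 μ := fun k i =>
    (hL4e k i).mono_exponent (by norm_num)
  have hInt : ∀ k i, Integrable (e k i) μ := fun k i => (hL2e k i).integrable one_le_two
  have hmean_e : ∀ k i, ∫ ω, e k i ω ∂μ = 0 := fun k i => by
    rw [← hmean, ← hlaw k i]
    exact (integral_map (hmeas k i).aemeasurable aestronglyMeasurable_id).symm
  have hvar_eq : ν = ∫ t, t ^ 2 ∂ρ := by
    have hρ : IsProbabilityMeasure ρ := by
      rw [← hlaw 0 i]; exact Measure.isProbabilityMeasure_map (hmeas 0 i).aemeasurable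
    have h2 : MemLp id 2 ρ := hL4.mono_exponent (by norm_num)
    rw [← hvar, variance_eq_sub h2]
    simp only [Pi.pow_apply, id_eq]
    rw [hmean]; ring
  have hsq_e : ∀ k i, ∫ ω, (e k i ω) ^ 2 ∂μ = ν := fun k i => by
    rw [hvar_eq, ← hlaw k i]
    exact (integral_map (hmeas k i).aemeasurable
      ((measurable_id.pow_const 2).aestronglyMeasurable)).symm
  set m4 : ℝ := ∫ t, t ^ 4 ∂ρ with hm4def
  have hm4_e : ∀ k i, ∫ ω, (e k i ω) ^ 4 ∂μ = m4 := fun k i => by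
    rw [hm4def, ← hlaw k i]
    exact (integral_map (hmeas k i).aemeasurable
      ((measurable_id.pow_const 4).aestronglyMeasurable)).symm
  have hm4nonneg : 0 ≤ m4 := integral_nonneg fun t => by positivity
  set C : ℝ := m4 + ν ^ 2 with hCdef
  have hCnonneg : 0 ≤ C := by positivity
  set g : ℕ → Ω → ℝ := fun k ω => e k i ω * e k j ω with hgdef
  have hgmeas : ∀ k, Measurable (g k) := fun k => (hmeas k i).mul (hmeas k j)
  have h24 : (1 : ℝ≥0∞) / 2 = 1 / 4 + 1 / 4 := by
    rw [ENNReal.div_add_div_same, one_div, ENNReal.div_eq_inv_mul,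
      show (4:ℝ≥0∞) = 2*2 by norm_num,
      ENNReal.mul_inv (Or.inl two_ne_zero) (Or.inl ENNReal.ofNat_ne_top), mul_assoc,
      show (1+1 : ℝ≥0∞) = 2 by norm_num,
      ENNReal.inv_mul_cancel two_ne_zero ENNReal.ofNat_ne_top, mul_one]
  have hgL2 : ∀ k, MemLp (g k) 2 μ := fun k => by
    have : ENNReal.HolderTriple 4 4 2 := ⟨by simpa only [one_div] using h24.symm⟩
    have h := (hL4e k j).smul (r := 2) (hL4e k i)
    exact (by simpa [smul_eq_mul] using h : MemLp (e k i * e k j) 2 μ)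
  set mg : ℝ := if i = j then ν else 0 with hmgdef
  have hgmean : ∀ k, ∫ ω, g k ω ∂μ = mg := by
    intro k
    by_cases hij : i = j
    · rw [hmgdef, if_pos hij]
      subst hij
      calc ∫ ω, g k ω ∂μ = ∫ ω, (e k i ω) ^ 2 ∂μ := by
            congr 1; funext ω; rw [hgdef]; ring
        _ = ν := hsq_e k i
    · rw [hmgdef, if_neg hij]
      have hind : IndepFun (e k i) (e k j) μ :=
        hindep.indepFun (show ((k, i) : ℕ × Fin n) ≠ (k, j) by simp [hij])
      have h := hind.integral_mul_eq_mul_integral (hInt k i).aestronglyMeasurable (hInt k j).aestronglyMeasurable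
      calc ∫ ω, g k ω ∂μ = ∫ ω, (e k i * e k j) ω ∂μ := rfl
        _ = (∫ ω, e k i ω ∂μ) * ∫ ω, e k j ω ∂μ := h
        _ = 0 := by rw [hmean_e k i, hmean_e k j]; ring
  have hgsq : ∀ k, ∫ ω, (g k ω) ^ 2 ∂μ ≤ C := by
    intro k
    by_cases hij : i = j
    · subst hij
      calc ∫ ω, (g k ω) ^ 2 ∂μ = ∫ ω, (e k i ω) ^ 4 ∂μ := by
            congr 1; funext ω; rw [hgdef]; ring
        _ = m4 := hm4_e k i
        _ ≤ C := by rw [hCdef]; nlinarith [sq_nonneg ν]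
    · have hind : IndepFun (fun ω => (e k i ω) ^ 2) (fun ω => (e k j ω) ^ 2) μ :=
        (hindep.indepFun (show ((k, i) : ℕ × Fin n) ≠ (k, j) by simp [hij])).comp
          (measurable_id.pow_const 2) (measurable_id.pow_const 2)
      have h := hind.integral_mul_eq_mul_integral (hL2e k i).integrable_sq.aestronglyMeasurable (hL2e k j).integrable_sq.aestronglyMeasurable
      calc ∫ ω, (g k ω) ^ 2 ∂μ
          = ∫ ω, ((fun ω => (e k i ω) ^ 2) * fun ω => (e k j ω) ^ 2) ω ∂μ := by
            congr 1; funext ω; rw [hgdef]; simp [Pi.mul_apply]; ring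
        _ = (∫ ω, (e k i ω) ^ 2 ∂μ) * ∫ ω, (e k j ω) ^ 2 ∂μ := h
        _ = ν * ν := by rw [hsq_e k i, hsq_e k j]
        _ ≤ C := by rw [hCdef]; nlinarith [hm4nonneg]
  have hgvar : ∀ k, variance (g k) μ ≤ C := by
    intro k
    rw [variance_eq_sub (hgL2 k)]
    have h1 : μ[(g k) ^ 2] = ∫ ω, (g k ω) ^ 2 ∂μ := by
      congr 1
    have := hgsq k
    rw [h1]
    nlinarith [sq_nonneg (∫ ω, g k ω ∂μ), hgsq k]
  have hgindep : ∀ k l, k ≠ l → IndepFun (g k) (g l) μ := fun k l hkl =>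
    hindep.indepFun_mul_mul (fun p => hmeas p.1 p.2) (k, i) (k, j) (l, i) (l, j)
      (by simp [hkl]) (by simp [hkl]) (by simp [hkl]) (by simp [hkl])
  have hXL2 : ∀ d : ℕ, MemLp (∑ k ∈ Finset.range d, g k) 2 μ := fun d =>
    memLp_finset_sum' _ fun k _ => hgL2 k
  have hEX : ∀ d : ℕ, ∫ ω, (∑ k ∈ Finset.range d, g k) ω ∂μ = d * mg := by
    intro d
    simp only [Finset.sum_apply]
    rw [integral_finset_sum _ fun k _ => (hgL2 k).integrable one_le_two]
    simp only [hgmean]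
    rw [Finset.sum_const, Finset.card_range, nsmul_eq_mul]
  have hVar : ∀ d : ℕ, variance (∑ k ∈ Finset.range d, g k) μ ≤ d * C := by
    intro d
    rw [IndepFun.variance_sum (fun k _ => hgL2 k)
      (fun k _ l _ hkl => hgindep k l hkl)]
    calc ∑ k ∈ Finset.range d, variance (g k) μ ≤ ∑ _k ∈ Finset.range d, C :=
          Finset.sum_le_sum fun k _ => hgvar k
      _ = d * C := by rw [Finset.sum_const, Finset.card_range, nsmul_eq_mul]
  -- the fixed summand H
  set H : Ω → ℝ := fun ω =>
    ∑ k ∈ Finset.range s, ((x k i + e k i ω) * (x k j + e k j ω) - g k ω) with hHdef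
  have hHmeas : Measurable H := by
    apply Finset.measurable_sum
    intro k _
    exact (((measurable_const.add (hmeas k i)).mul (measurable_const.add (hmeas k j))).sub
      (hgmeas k))
  obtain ⟨m₀, hm₀⟩ : ∃ m : ℕ, μ {ω | (m : ℝ) ≤ |H ω|} ≤ ENNReal.ofReal (ε' / 2) := by
    have h1 : Tendsto (fun m : ℕ => μ {ω | (m : ℝ) ≤ |H ω|}) atTop
        (𝓝 (μ (⋂ m : ℕ, {ω | (m : ℝ) ≤ |H ω|}))) :=
      tendsto_measure_iInter_atTop
        (fun m => (measurableSet_le measurable_const hHmeas.abs).nullMeasurableSet)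
        (fun a b hab ω hω => le_trans (show (a : ℝ) ≤ (b : ℝ) from Nat.cast_le.2 hab) hω)
        ⟨0, measure_ne_top _ _⟩
    have h2 : (⋂ m : ℕ, {ω | (m : ℝ) ≤ |H ω|}) = ∅ := by
      ext ω
      simp only [Set.mem_iInter, Set.mem_setOf_eq, Set.mem_empty_iff_false, iff_false,
        not_forall, not_le]
      obtain ⟨m, hm⟩ := exists_nat_gt |H ω|
      exact ⟨m, hm⟩
    rw [h2, measure_empty] at h1
    obtain ⟨m, hm⟩ := ((tendsto_order.1 h1).2 (ENNReal.ofReal (ε' / 2))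
      (by simpa using half_pos hε')).exists
    exact ⟨m, hm.le⟩
  have hdecomp : ∀ d : ℕ, s ≤ d → ∀ ω,
      ∑ k ∈ Finset.range d, (x k i + e k i ω) * (x k j + e k j ω)
        = (∑ k ∈ Finset.range d, g k) ω + H ω := by
    intro d hd ω
    simp only [Finset.sum_apply, hHdef]
    have h1 : ∑ k ∈ Finset.range d, ((x k i + e k i ω) * (x k j + e k j ω) - g k ω)
        = ∑ k ∈ Finset.range s, ((x k i + e k i ω) * (x k j + e k j ω) - g k ω) := by
      refine (Finset.sum_subset (Finset.range_subset_range.2 hd) ?_).symm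
      intro k _ hk
      rw [Finset.mem_range, not_lt] at hk
      rw [hx k hk i, hx k hk j, hgdef]
      ring
    rw [← h1, Finset.sum_sub_distrib]
    ring
  -- choose M
  refine ⟨max (max s 1) (max ⌈2 * m₀ / τ⌉₊ ⌈8 * C / (τ ^ 2 * ε')⌉₊), ?_⟩
  intro d hd
  have hds : s ≤ d := le_trans (le_trans (le_max_left s 1) (le_max_left _ _)) hd
  have hd1 : 1 ≤ d := le_trans (le_trans (le_max_right s 1) (le_max_left _ _)) hd
  have hd0 : (0 : ℝ) < d := by exact_mod_cast hd1
  have hdm₀ : (2 * m₀ / τ : ℝ) ≤ d := by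
    have := le_trans (le_trans (le_max_left _ _) (le_max_right _ _)) hd
    exact Nat.ceil_le.1 this
  have hdC : (8 * C / (τ ^ 2 * ε') : ℝ) ≤ d := by
    have := le_trans (le_trans (le_max_right _ _) (le_max_right _ _)) hd
    exact Nat.ceil_le.1 this
  have hm₀half : (m₀ : ℝ) ≤ d * τ / 2 := by
    rw [div_le_iff₀ hτ] at hdm₀
    linarith
  -- Chebyshev
  have hcheb : μ {ω | d * τ / 2 ≤ |(∑ k ∈ Finset.range d, g k) ω - d * mg|}
      ≤ ENNReal.ofReal (ε' / 2) := by
    have h := meas_ge_le_variance_div_sq (μ := μ) (hXL2 d)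
      (show (0 : ℝ) < d * τ / 2 by positivity)
    rw [show μ[∑ k ∈ Finset.range d, g k] = (d : ℝ) * mg from hEX d] at h
    refine h.trans (ENNReal.ofReal_le_ofReal ?_)
    have h8 : 8 * C ≤ d * (τ ^ 2 * ε') := by
      rw [div_le_iff₀ (by positivity)] at hdC
      linarith
    calc variance (∑ k ∈ Finset.range d, g k) μ / (d * τ / 2) ^ 2
        ≤ (d * C) / (d * τ / 2) ^ 2 := by gcongr; exact hVar d
      _ ≤ ε' / 2 := by
          rw [div_le_iff₀ (by positivity)]
          nlinarith [mul_le_mul_of_nonneg_left h8 (show (0:ℝ) ≤ (d:ℝ)/8 by positivity)]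
  -- inclusion
  have hsub : {ω | τ ≤ |(∑ k ∈ Finset.range d,
        (x k i + e k i ω) * (x k j + e k j ω)) / d - mg|}
      ⊆ {ω | d * τ / 2 ≤ |(∑ k ∈ Finset.range d, g k) ω - d * mg|}
        ∪ {ω | (m₀ : ℝ) ≤ |H ω|} := by
    intro ω hω
    simp only [Set.mem_setOf_eq] at hω
    rw [hdecomp d hds ω] at hω
    by_cases hA : d * τ / 2 ≤ |(∑ k ∈ Finset.range d, g k) ω - d * mg|
    · exact Or.inl hA
    · right
      push_neg at hA
      simp only [Set.mem_setOf_eq]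
      by_contra hB
      push_neg at hB
      have h1 : ((∑ k ∈ Finset.range d, g k) ω + H ω) / d - mg
          = ((∑ k ∈ Finset.range d, g k) ω - d * mg + H ω) / d := by
        field_simp
        ring
      rw [h1, abs_div, abs_of_pos hd0, le_div_iff₀ hd0] at hω
      have h2 : |(∑ k ∈ Finset.range d, g k) ω - d * mg + H ω|
          ≤ |(∑ k ∈ Finset.range d, g k) ω - d * mg| + |H ω| := abs_add_le _ _
      nlinarith
  calc μ {ω | τ ≤ |(∑ k ∈ Finset.range d,
        (x k i + e k i ω) * (x k j + e k j ω)) / d - mg|}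
      ≤ μ ({ω | d * τ / 2 ≤ |(∑ k ∈ Finset.range d, g k) ω - d * mg|}
          ∪ {ω | (m₀ : ℝ) ≤ |H ω|}) := measure_mono hsub
    _ ≤ μ {ω | d * τ / 2 ≤ |(∑ k ∈ Finset.range d, g k) ω - d * mg|}
          + μ {ω | (m₀ : ℝ) ≤ |H ω|} := measure_union_le _ _
    _ ≤ ENNReal.ofReal (ε' / 2) + ENNReal.ofReal (ε' / 2) := add_le_add hcheb hm₀
    _ = ENNReal.ofReal ε' := by
        rw [← ENNReal.ofReal_add (by positivity) (by positivity)]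
        norm_num


/-- (HDLSS setting with absolutely continuous noise law.)  Let
`R_d = {x_1'/‖x_1'‖, …, x_n'/‖x_n'‖} ⊆ ℝᵈ` be the normalized observed points (here realized in
`EuclideanSpace ℝ (Fin d)`, with the harmless convention `‖v‖⁻¹ • v = 0` when `v = 0`).  Then
`inf_Z d_H(R_d, col(Z)) = o_P(1)` as `d → ∞`, the infimum running over all real `d × n` matrices
`Z` with orthonormal columns (`Zᵀ Z = I_n`): for all `ε, η > 0` there is `M` such that for every
`d > M`, with probability at least `1 - ε` there exists such a `Z` with
`d_H(R_d, col(Z)) ≤ η`. -/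
theorem normalized_observed_cloud_close_to_orthonormal_columns
    {Ω : Type*} [MeasurableSpace Ω] (μ : Measure Ω) [IsProbabilityMeasure μ]
    (n s : ℕ) (hn : 2 ≤ n) (hs : 1 ≤ s)
    (x : ℕ → Fin n → ℝ) (hx : ∀ k, s ≤ k → ∀ i, x k i = 0)
    (e : ℕ → Fin n → Ω → ℝ) (ρ : Measure ℝ) (ν : ℝ) (hν : 0 < ν)
    (hmeas : ∀ k i, Measurable (e k i))
    (hindep : iIndepFun (fun p : ℕ × Fin n => e p.1 p.2) μ)
    (hlaw : ∀ k i, μ.map (e k i) = ρ)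
    (hmean : ∫ t, t ∂ρ = 0)
    (hvar : variance id ρ = ν)
    (hL4 : MemLp id 4 ρ)
    (hvar4 : variance (fun t => t ^ 2) ρ ≠ 0)
    (hcont : ρ ≪ (volume : Measure ℝ)) :
    ∀ ε > (0 : ℝ), ∀ η > (0 : ℝ), ∃ M : ℕ, ∀ d > M,
      ENNReal.ofReal (1 - ε) ≤
        μ {ω | ∃ Z : Matrix (Fin d) (Fin n) ℝ, Z.transpose * Z = 1 ∧
          Metric.hausdorffDist
            (Set.range (fun i : Fin n =>
              ‖((WithLp.equiv 2 (Fin d → ℝ)).symm (fun k : Fin d => x k i + e k i ω) :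
                  EuclideanSpace ℝ (Fin d))‖⁻¹ •
                ((WithLp.equiv 2 (Fin d → ℝ)).symm (fun k : Fin d => x k i + e k i ω) :
                  EuclideanSpace ℝ (Fin d))))
            (Set.range (fun j : Fin n =>
              ((WithLp.equiv 2 (Fin d → ℝ)).symm (fun k : Fin d => Z k j) :
                  EuclideanSpace ℝ (Fin d)))) ≤ η} := by
  intro ε hε η hη
  classical
  set η' : ℝ := min η 1 with hη'def
  have hη'pos : 0 < η' := lt_min hη one_pos
  have hη'le1 : η' ≤ 1 := min_le_right _ _
  obtain ⟨δ, hδpos, hδ1, hδprop⟩ := gram_perturb n η' hη'pos hη'le1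
  have hmin1 : 0 < min δ 1 := lt_min hδpos one_pos
  set τ : ℝ := ν / 2 * min δ 1 with hτdef
  have hτpos : 0 < τ := mul_pos (half_pos hν) hmin1
  have hτν : τ ≤ ν / 2 := by
    rw [hτdef]
    nlinarith [min_le_right δ 1, half_pos hν]
  set ε' : ℝ := ε / (n * n + 1) with hε'def
  have hε'pos : 0 < ε' := by positivity
  choose M hM using fun p : Fin n × Fin n =>
    pair_bound μ s x hx e ρ ν hmeas hindep hlaw hmean hvar hL4 p.1 p.2 τ ε' hτpos hε'pos
  refine ⟨Finset.univ.sup M, ?_⟩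
  intro d hd
  have hdM : ∀ p : Fin n × Fin n, M p ≤ d := fun p =>
    le_of_lt (lt_of_le_of_lt (Finset.le_sup (Finset.mem_univ p)) hd)
  have hd1 : 1 ≤ d := by omega
  have hd0 : (0 : ℝ) < d := by exact_mod_cast hd1
  set bad : Fin n × Fin n → Set Ω := fun p => {ω | τ ≤ |(∑ k ∈ Finset.range d,
      (x k p.1 + e k p.1 ω) * (x k p.2 + e k p.2 ω)) / d
      - (if p.1 = p.2 then ν else 0)|} with hbaddef
  have hbadmeas : ∀ p, MeasurableSet (bad p) := by
    intro p
    apply measurableSet_le measurable_const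
    apply Measurable.abs
    apply Measurable.sub _ measurable_const
    apply Measurable.div_const
    apply Finset.measurable_sum
    intro k _
    exact (measurable_const.add (hmeas k p.1)).mul (measurable_const.add (hmeas k p.2))
  have hbadle : ∀ p, μ (bad p) ≤ ENNReal.ofReal ε' := fun p => hM p d (hdM p)
  have hunion : μ (⋃ p, bad p) ≤ ENNReal.ofReal ε := by
    calc μ (⋃ p, bad p) ≤ ∑ p : Fin n × Fin n, μ (bad p) := measure_iUnion_fintype_le _ _
      _ ≤ ∑ _p : Fin n × Fin n, ENNReal.ofReal ε' := Finset.sum_le_sum fun p _ => hbadle p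
      _ = ((n * n : ℕ) : ℝ≥0∞) * ENNReal.ofReal ε' := by
          rw [Finset.sum_const, Finset.card_univ]
          simp [Fintype.card_prod, nsmul_eq_mul]
      _ = ENNReal.ofReal ((n * n : ℕ) * ε') := by
          rw [ENNReal.ofReal_mul (by positivity), ENNReal.ofReal_natCast]
      _ ≤ ENNReal.ofReal ε := by
          apply ENNReal.ofReal_le_ofReal
          have h1 : ((n * n : ℕ) : ℝ) * ε' = (n : ℝ) * n * ε / ((n : ℝ) * n + 1) := by
            rw [hε'def]; push_cast; ring
          rw [h1, div_le_iff₀ (by positivity : (0:ℝ) < (n : ℝ) * n + 1)]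
          nlinarith [hε.le, sq_nonneg (n:ℝ)]
  have hincl : (⋃ p, bad p)ᶜ ⊆ {ω | ∃ Z : Matrix (Fin d) (Fin n) ℝ, Z.transpose * Z = 1 ∧
          Metric.hausdorffDist
            (Set.range (fun i : Fin n =>
              ‖((WithLp.equiv 2 (Fin d → ℝ)).symm (fun k : Fin d => x k i + e k i ω) :
                  EuclideanSpace ℝ (Fin d))‖⁻¹ •
                ((WithLp.equiv 2 (Fin d → ℝ)).symm (fun k : Fin d => x k i + e k i ω) :
                  EuclideanSpace ℝ (Fin d))))
            (Set.range (fun j : Fin n =>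
              ((WithLp.equiv 2 (Fin d → ℝ)).symm (fun k : Fin d => Z k j) :
                  EuclideanSpace ℝ (Fin d)))) ≤ η} := by
    intro ω hω
    simp only [Set.mem_compl_iff, Set.mem_iUnion, not_exists] at hω
    set X' : Fin n → EuclideanSpace ℝ (Fin d) := fun i =>
      (WithLp.equiv 2 (Fin d → ℝ)).symm (fun k : Fin d => x k i + e k i ω) with hX'def
    have hS : ∀ i j, ⟪X' i, X' j⟫ =
        ∑ k ∈ Finset.range d, (x k i + e k i ω) * (x k j + e k j ω) := by
      intro i j
      rw [hX'def, PiLp.inner_apply]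
      simp only [RCLike.inner_apply, conj_trivial, WithLp.equiv_symm_apply, PiLp.toLp_apply]
      rw [← Fin.sum_univ_eq_sum_range (fun k => (x k i + e k i ω) * (x k j + e k j ω)) d]
      exact Finset.sum_congr rfl fun k _ => mul_comm _ _
    have hgood : ∀ i j, |(⟪X' i, X' j⟫) / d - (if i = j then ν else 0)| ≤ τ := by
      intro i j
      have h := hω (i, j)
      rw [hbaddef] at h
      simp only [Set.mem_setOf_eq, not_le] at h
      rw [hS i j]
      exact (le_of_lt h)
    have hlow : ∀ i, d * (ν / 2) ≤ ‖X' i‖ ^ 2 := by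
      intro i
      have h := hgood i i
      rw [if_pos rfl, real_inner_self_eq_norm_sq] at h
      have h1 := (abs_le.1 h).1
      have h2 : ν - τ ≤ ‖X' i‖ ^ 2 / d := by linarith
      have h3 : (ν - τ) * d ≤ ‖X' i‖ ^ 2 := (le_div_iff₀ hd0).1 h2
      nlinarith
    have hpos : ∀ i, 0 < ‖X' i‖ := by
      intro i
      have h2 : 0 < ‖X' i‖ ^ 2 := lt_of_lt_of_le (by positivity) (hlow i)
      nlinarith [norm_nonneg (X' i)]
    have hGram : ∀ i j, |⟪(fun i => ‖X' i‖⁻¹ • X' i) i, (fun i => ‖X' i‖⁻¹ • X' i) j⟫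
        - (if i = j then (1:ℝ) else 0)| ≤ δ := by
      intro i j
      have hinner : ⟪‖X' i‖⁻¹ • X' i, ‖X' j‖⁻¹ • X' j⟫
          = ‖X' i‖⁻¹ * (‖X' j‖⁻¹ * ⟪X' i, X' j⟫) := by
        rw [real_inner_smul_left, real_inner_smul_right]
      by_cases hij : i = j
      · subst hij
        simp only [if_pos rfl]
        rw [hinner, real_inner_self_eq_norm_sq]
        have := (hpos i).ne'
        have heq : ‖X' i‖⁻¹ * (‖X' i‖⁻¹ * ‖X' i‖ ^ 2) = 1 := by
          field_simp
        rw [heq]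
        simp [hδpos.le]
      · simp only [if_neg hij]
        have hPle : |⟪X' i, X' j⟫| ≤ d * τ := by
          have h := hgood i j
          rw [if_neg hij, sub_zero, abs_div, abs_of_pos hd0, div_le_iff₀ hd0] at h
          linarith
        have hab : d * (ν / 2) ≤ ‖X' i‖ * ‖X' j‖ := by
          nlinarith [mul_le_mul (hlow i) (hlow j) (by positivity : (0:ℝ) ≤ d * (ν/2))
            (sq_nonneg (‖X' i‖)), mul_nonneg (norm_nonneg (X' i)) (norm_nonneg (X' j)),
            norm_nonneg (X' i), norm_nonneg (X' j)]
        have habpos : 0 < ‖X' i‖ * ‖X' j‖ := mul_pos (hpos i) (hpos j)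
        rw [hinner, sub_zero, abs_mul, abs_mul, abs_inv, abs_inv, abs_norm, abs_norm]
        have heq : ‖X' i‖⁻¹ * (‖X' j‖⁻¹ * |⟪X' i, X' j⟫|)
            = |⟪X' i, X' j⟫| / (‖X' i‖ * ‖X' j‖) := by
          field_simp
        rw [heq, div_le_iff₀ habpos]
        calc |⟪X' i, X' j⟫| ≤ d * τ := hPle
          _ = min δ 1 * (d * (ν / 2)) := by rw [hτdef]; ring
          _ ≤ min δ 1 * (‖X' i‖ * ‖X' j‖) := by
              apply mul_le_mul_of_nonneg_left hab hmin1.le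
          _ ≤ δ * (‖X' i‖ * ‖X' j‖) := by
              apply mul_le_mul_of_nonneg_right (min_le_left δ 1) habpos.le
    obtain ⟨z, hzon, hzclose⟩ := hδprop d (fun i => ‖X' i‖⁻¹ • X' i) hGram
    refine ⟨Matrix.of fun k j => z j k, ?_, ?_⟩
    · ext a b
      rw [Matrix.mul_apply, Matrix.one_apply]
      have h := orthonormal_iff_ite.1 hzon a b
      rw [PiLp.inner_apply] at h
      simp only [RCLike.inner_apply, conj_trivial] at h
      simpa [Matrix.transpose_apply, Matrix.of_apply, mul_comm] using h
    · have hcols : (fun j : Fin n => ((WithLp.equiv 2 (Fin d → ℝ)).symm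
          (fun k : Fin d => (Matrix.of fun k j => z j k) k j) : EuclideanSpace ℝ (Fin d))) = z :=
        rfl
      rw [hcols]
      apply Metric.hausdorffDist_le_of_mem_dist hη.le
      · rintro p ⟨i, rfl⟩
        refine ⟨z i, Set.mem_range_self i, ?_⟩
        rw [dist_eq_norm]
        calc ‖(fun i => ‖X' i‖⁻¹ • X' i) i - z i‖ ≤ η' := hzclose i
          _ ≤ η := min_le_left _ _
      · rintro p ⟨i, rfl⟩
        refine ⟨‖X' i‖⁻¹ • X' i, Set.mem_range_self i, ?_⟩
        rw [dist_eq_norm, norm_sub_rev]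
        calc ‖(fun i => ‖X' i‖⁻¹ • X' i) i - z i‖ ≤ η' := hzclose i
          _ ≤ η := min_le_left _ _
  calc ENNReal.ofReal (1 - ε)
      = 1 - ENNReal.ofReal ε := by rw [ENNReal.ofReal_sub 1 hε.le, ENNReal.ofReal_one]
    _ ≤ 1 - μ (⋃ p, bad p) := tsub_le_tsub_left hunion 1
    _ = μ ((⋃ p, bad p)ᶜ) := by
        rw [measure_compl (MeasurableSet.iUnion fun p => hbadmeas p) (measure_ne_top _ _),
          measure_univ]
    _ ≤ _ := measure_mono hincl
end

section
/- Let N ≥ 2 and let μ be the Haar probability measure on the orthogonal group O(N). Let m, m', t, t', k, q ∈ [N] with (m, t) ≠ (m', t'). Then ∫_{O(N)} g_{mk} · g_{tq} · g_{m'k} · g_{t'q} dμ(g) equals: 1/(N(N+2)) if k = q, m = t, m' = t', m ≠ m'; 1/(N(N+2)) if k = q, m = t', t = m', m ≠ t; −1/(N(N−1)(N+2)) if k ≠ q, m = t, m' = t', m ≠ m'; −1/(N(N−1)(N+2)) if k ≠ q, m = t', t = m', m ≠ t; and 0 in all other cases. -/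
open MeasureTheory ProbabilityTheory

namespace WgAux

abbrev OG (N : ℕ) := Matrix.orthogonalGroup (Fin N) ℝ

variable {N : ℕ}

def e (g : OG N) (i j : Fin N) : ℝ := (g : Matrix (Fin N) (Fin N) ℝ) i j

lemma e_def (g : OG N) (i j : Fin N) : (g : Matrix (Fin N) (Fin N) ℝ) i j = e g i j := rfl

lemma cont_e (i j : Fin N) : Continuous fun g : OG N => e g i j :=
  ((continuous_apply j).comp ((continuous_apply i).comp continuous_subtype_val))

lemma sum_sq (g : OG N) (k : Fin N) : ∑ c, e g c k * e g c k = 1 := by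
  have h := Matrix.UnitaryGroup.star_mul_self g
  have h2 := congrArg (fun M => M k k) h
  simp only [Matrix.mul_apply, Matrix.one_apply_eq, Matrix.star_apply, star_trivial] at h2
  simpa [e] using h2

lemma sum_orth (g : OG N) {k q : Fin N} (hkq : k ≠ q) : ∑ c, e g c k * e g c q = 0 := by
  have h := Matrix.UnitaryGroup.star_mul_self g
  have h2 := congrArg (fun M => M k q) h
  simp only [Matrix.mul_apply, Matrix.star_apply, star_trivial, Matrix.one_apply, hkq,
    if_false] at h2
  simpa [e] using h2

lemma abs_e_le_one (g : OG N) (i j : Fin N) : |e g i j| ≤ 1 := by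
  rw [abs_le_one_iff_mul_self_le_one]
  calc e g i j * e g i j ≤ ∑ c, e g c j * e g c j :=
        Finset.single_le_sum (f := fun c => e g c j * e g c j)
          (fun c _ => mul_self_nonneg _) (Finset.mem_univ i)
    _ = 1 := sum_sq g j

def mkO (M : Matrix (Fin N) (Fin N) ℝ) (h : M * M.transpose = 1) : OG N :=
  ⟨M, by
    rw [Matrix.mem_orthogonalGroup_iff]
    have : star M = M.transpose := by ext i j; simp [Matrix.star_apply]
    exact h⟩

lemma e_mkO_mul (M : Matrix (Fin N) (Fin N) ℝ) (h : M * M.transpose = 1) (g : OG N)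
    (i j : Fin N) : e (mkO M h * g) i j = ∑ l, M i l * e g l j := by
  simp [e, mkO, Matrix.mul_apply]

lemma sum_two {f : Fin N → ℝ} {a b : Fin N} (hab : a ≠ b) (x y : ℝ)
    (hf : ∀ j, f j = (if j = a then x else 0) + (if j = b then y else 0)) :
    ∑ j, f j = x + y := by
  simp only [hf, Finset.sum_add_distrib]
  rw [Finset.sum_ite_eq' Finset.univ a fun _ => x, Finset.sum_ite_eq' Finset.univ b fun _ => y]
  simp

lemma sum_one {f : Fin N → ℝ} {a : Fin N} (x : ℝ)
    (hf : ∀ j, f j = if j = a then x else 0) : ∑ j, f j = x := by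
  simp only [hf]
  rw [Finset.sum_ite_eq' Finset.univ a fun _ => x]
  simp

/-! ### sign matrices -/

def sg (r i : Fin N) : ℝ := if i = r then -1 else 1

lemma sign_orth (r : Fin N) :
    Matrix.diagonal (sg r) * (Matrix.diagonal (sg r)).transpose = 1 := by
  rw [Matrix.diagonal_transpose, Matrix.diagonal_mul_diagonal]
  have : (fun i => sg r i * sg r i) = fun _ => (1:ℝ) := by
    funext i; unfold sg; split_ifs <;> norm_num
  rw [this, Matrix.diagonal_one]

lemma e_sign (r : Fin N) (g : OG N) (i j : Fin N) :
    e (mkO _ (sign_orth r) * g) i j = sg r i * e g i j := by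
  rw [e_mkO_mul]
  simp [Matrix.diagonal_apply, ite_mul, Finset.sum_ite_eq]

/-! ### permutation matrices -/

lemma perm_orth (σ : Equiv.Perm (Fin N)) :
    (σ.toPEquiv.toMatrix : Matrix (Fin N) (Fin N) ℝ) * (σ.toPEquiv.toMatrix).transpose = 1 := by
  rw [← PEquiv.toMatrix_symm, ← PEquiv.toMatrix_trans, ← Equiv.toPEquiv_symm,
    ← Equiv.toPEquiv_trans]
  simp

lemma e_perm (σ : Equiv.Perm (Fin N)) (g : OG N) (i j : Fin N) :
    e (mkO _ (perm_orth σ) * g) i j = e g (σ i) j := by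
  show ((σ.toPEquiv.toMatrix : Matrix (Fin N) (Fin N) ℝ) * (g : Matrix (Fin N) (Fin N) ℝ)) i j = _
  rw [PEquiv.toMatrix_toPEquiv_mul]
  rfl

lemma exists_perm {a b c d : Fin N} (hab : a ≠ b) (hcd : c ≠ d) :
    ∃ σ : Equiv.Perm (Fin N), σ c = a ∧ σ d = b := by
  classical
  refine ⟨(Equiv.swap a c).trans (Equiv.swap ((Equiv.swap a c) d) b), ?_, ?_⟩
  · have h1 : (Equiv.swap a c) d ≠ a := fun hcontra =>
      hcd (((Equiv.swap a c).injective (hcontra.trans (Equiv.swap_apply_right a c).symm)).symm)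
    simp only [Equiv.trans_apply, Equiv.swap_apply_right]
    exact Equiv.swap_apply_of_ne_of_ne (Ne.symm h1) hab
  · simp only [Equiv.trans_apply, Equiv.swap_apply_left]

/-! ### rotation matrices -/

noncomputable def rc : ℝ := (Real.sqrt 2)⁻¹

lemma rc_mul_rc : rc * rc = 1/2 := by
  rw [rc, ← mul_inv]
  rw [Real.mul_self_sqrt (by norm_num)]
  norm_num

noncomputable def rotM (a b : Fin N) : Matrix (Fin N) (Fin N) ℝ :=
  Matrix.of fun i j =>
    if i = a then (if j = a then rc else if j = b then rc else 0)
    else if i = b then (if j = a then rc else if j = b then -rc else 0)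
    else if j = i then 1 else 0

lemma rot_orth {a b : Fin N} (hab : a ≠ b) : rotM a b * (rotM a b).transpose = 1 := by
  ext i i'
  rw [Matrix.mul_apply, Matrix.one_apply]
  simp only [rotM, Matrix.transpose_apply, Matrix.of_apply]
  rcases eq_or_ne i a with hia | hia <;> rcases eq_or_ne i b with hib | hib <;>
    rcases eq_or_ne i' a with hi'a | hi'a <;> rcases eq_or_ne i' b with hi'b | hi'b <;>
    first
      | (exact absurd ((hia.symm.trans hib) : a = b) hab)
      | (exact absurd ((hi'a.symm.trans hi'b) : a = b) hab)
      | skip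
  · subst hia; subst hi'a
    rw [sum_two hab (rc*rc) (rc*rc) (fun j => by split_ifs <;> simp_all <;> ring)]
    have := rc_mul_rc
    rw [if_pos rfl]; linarith
  · subst hia; subst hi'b
    rw [sum_two hab (rc*rc) (rc*(-rc)) (fun j => by split_ifs <;> simp_all <;> ring),
      if_neg hab]
    ring
  · subst hia
    rw [Finset.sum_eq_zero (fun j _ => by split_ifs <;> simp_all), if_neg (Ne.symm hi'a)]
  · subst hib; subst hi'a
    rw [sum_two hab (rc*rc) ((-rc)*rc) (fun j => by split_ifs <;> simp_all <;> ring),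
      if_neg (Ne.symm hab)]
    ring
  · subst hib; subst hi'b
    rw [sum_two hab (rc*rc) ((-rc)*(-rc)) (fun j => by split_ifs <;> simp_all <;> ring)]
    have := rc_mul_rc
    rw [if_pos rfl]; nlinarith [rc_mul_rc]
  · subst hib
    rw [Finset.sum_eq_zero (fun j _ => by split_ifs <;> simp_all), if_neg (Ne.symm hi'b)]
  · subst hi'a
    rw [Finset.sum_eq_zero (fun j _ => by split_ifs <;> simp_all), if_neg hia]
  · subst hi'b
    rw [Finset.sum_eq_zero (fun j _ => by split_ifs <;> simp_all), if_neg hib]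
  · rcases eq_or_ne i i' with hii | hii
    · subst hii
      rw [sum_one (a := i) 1 (fun j => by split_ifs <;> simp_all), if_pos rfl]
    · rw [Finset.sum_eq_zero (fun j _ => by split_ifs <;> simp_all), if_neg hii]

lemma e_rot {a b : Fin N} (hab : a ≠ b) (g : OG N) (i j : Fin N) :
    e (mkO _ (rot_orth hab) * g) i j =
      if i = a then rc * (e g a j + e g b j)
      else if i = b then rc * (e g a j - e g b j)
      else e g i j := by
  rw [e_mkO_mul]
  rcases eq_or_ne i a with hia | hia
  · rw [sum_two hab (rc * e g a j) (rc * e g b j)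
      (fun l => by simp only [rotM, Matrix.of_apply, if_pos hia]; split_ifs <;> simp_all),
      if_pos hia]
    ring
  · rcases eq_or_ne i b with hib | hib
    · rw [sum_two hab (rc * e g a j) (-rc * e g b j)
        (fun l => by simp only [rotM, Matrix.of_apply, if_neg hia, if_pos hib]
                     split_ifs <;> simp_all <;> ring),
        if_neg hia, if_pos hib]
      ring
    · rw [sum_one (a := i) (e g i j)
        (fun l => by simp only [rotM, Matrix.of_apply, if_neg hia, if_neg hib]
                     split_ifs <;> simp_all),
        if_neg hia, if_neg hib]

/-! ### double sums with diagonal -/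

lemma sum_ifdiag (X Y : ℝ) :
    (∑ _c : Fin N, ∑ _d : Fin N, X) = X * 0 → True := fun _ => trivial

lemma sum_diag_offdiag (X Y : ℝ) :
    (∑ c : Fin N, ∑ d : Fin N, if c = d then X else Y)
      = (N:ℝ)*X + (N:ℝ)*((N:ℝ)-1)*Y := by
  have inner : ∀ c : Fin N, (∑ d : Fin N, if c = d then X else Y) = X + ((N:ℝ)-1)*Y := by
    intro c
    calc (∑ d : Fin N, if c = d then X else Y)
        = ∑ d : Fin N, (Y + if c = d then X - Y else 0) :=
          Finset.sum_congr rfl fun d _ => by split_ifs <;> ring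
      _ = (N:ℝ)*Y + (X - Y) := by
          rw [Finset.sum_add_distrib, Finset.sum_const,
            Finset.sum_ite_eq Finset.univ c fun _ => X - Y]
          simp [Finset.card_univ, nsmul_eq_mul]
      _ = X + ((N:ℝ)-1)*Y := by ring
  rw [Finset.sum_congr rfl fun c _ => inner c, Finset.sum_const, Finset.card_univ,
    Fintype.card_fin, nsmul_eq_mul]
  ring

/-! ### integral lemmas -/

variable [MeasurableSpace (OG N)] [BorelSpace (OG N)]
  {μ : Measure (OG N)} [IsProbabilityMeasure μ] [μ.IsMulLeftInvariant]

lemma int4 (a b c d k q u v : Fin N) :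
    Integrable (fun g : OG N => e g a k * e g b q * e g c u * e g d v) μ := by
  refine (integrable_const (1:ℝ)).mono'
    ((((cont_e a k).mul (cont_e b q)).mul (cont_e c u) |>.mul (cont_e d v)).aestronglyMeasurable)
    (ae_of_all _ fun g => ?_)
  simp only [Real.norm_eq_abs, abs_mul]
  have h1 := abs_e_le_one g a k; have h2 := abs_e_le_one g b q
  have h3 := abs_e_le_one g c u; have h4 := abs_e_le_one g d v
  have n1 := abs_nonneg (e g a k); have n2 := abs_nonneg (e g b q)
  have n3 := abs_nonneg (e g c u); have n4 := abs_nonneg (e g d v)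
  exact mul_le_one₀ (mul_le_one₀ (mul_le_one₀ h1 n2 h2) n3 h3) n4 h4

lemma sign_step (r a b c d k q u v : Fin N) :
    ∫ g, e g a k * e g b q * e g c u * e g d v ∂μ
      = (sg r a * sg r b * sg r c * sg r d) *
        ∫ g, e g a k * e g b q * e g c u * e g d v ∂μ := by
  conv_lhs => rw [← integral_mul_left_eq_self
    (fun g : OG N => e g a k * e g b q * e g c u * e g d v) (mkO _ (sign_orth r))]
  rw [← integral_const_mul]
  refine integral_congr_ae (ae_of_all _ fun g => ?_)
  simp only [e_sign]; ring

lemma sign_zero (a b c d k q u v : Fin N) (r : Fin N)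
    (hr : sg r a * sg r b * sg r c * sg r d = -1) :
    ∫ g, e g a k * e g b q * e g c u * e g d v ∂μ = 0 := by
  have h := sign_step (μ := μ) r a b c d k q u v
  rw [hr] at h; linarith

lemma perm_step (σ : Equiv.Perm (Fin N)) (a b c d k q u v : Fin N) :
    ∫ g, e g (σ a) k * e g (σ b) q * e g (σ c) u * e g (σ d) v ∂μ
      = ∫ g, e g a k * e g b q * e g c u * e g d v ∂μ := by
  rw [← integral_mul_left_eq_self
    (fun g : OG N => e g a k * e g b q * e g c u * e g d v) (mkO _ (perm_orth σ))]
  exact integral_congr_ae (ae_of_all _ fun g => by simp only [e_perm])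

lemma int_split5 (F f1 f2 f3 f4 f5 : OG N → ℝ) (c1 c2 c3 c4 c5 : ℝ)
    (h1 : Integrable f1 μ) (h2 : Integrable f2 μ) (h3 : Integrable f3 μ)
    (h4 : Integrable f4 μ) (h5 : Integrable f5 μ)
    (hF : ∀ g, F g = c1*f1 g + c2*f2 g + c3*f3 g + c4*f4 g + c5*f5 g) :
    ∫ g, F g ∂μ = c1*(∫ g, f1 g ∂μ) + c2*(∫ g, f2 g ∂μ) + c3*(∫ g, f3 g ∂μ)
      + c4*(∫ g, f4 g ∂μ) + c5*(∫ g, f5 g ∂μ) := by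
  have e1 : ∫ g, F g ∂μ
      = ∫ g, (c1*f1 g + c2*f2 g + c3*f3 g + c4*f4 g + c5*f5 g) ∂μ :=
    integral_congr_ae (ae_of_all _ hF)
  rw [e1, integral_add (by exact (((h1.const_mul c1).add (h2.const_mul c2)).add
      (h3.const_mul c3)).add (h4.const_mul c4)) (h5.const_mul c5),
    integral_add (by exact ((h1.const_mul c1).add (h2.const_mul c2)).add (h3.const_mul c3))
      (h4.const_mul c4),
    integral_add (by exact (h1.const_mul c1).add (h2.const_mul c2)) (h3.const_mul c3),
    integral_add (h1.const_mul c1) (h2.const_mul c2),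
    integral_const_mul, integral_const_mul, integral_const_mul, integral_const_mul,
    integral_const_mul]

lemma int_split9 (F f1 f2 f3 f4 f5 f6 f7 f8 f9 : OG N → ℝ) (c1 c2 c3 c4 c5 c6 c7 c8 c9 : ℝ)
    (h1 : Integrable f1 μ) (h2 : Integrable f2 μ) (h3 : Integrable f3 μ)
    (h4 : Integrable f4 μ) (h5 : Integrable f5 μ) (h6 : Integrable f6 μ)
    (h7 : Integrable f7 μ) (h8 : Integrable f8 μ) (h9 : Integrable f9 μ)
    (hF : ∀ g, F g = c1*f1 g + c2*f2 g + c3*f3 g + c4*f4 g + c5*f5 g + c6*f6 g + c7*f7 g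
      + c8*f8 g + c9*f9 g) :
    ∫ g, F g ∂μ = c1*(∫ g, f1 g ∂μ) + c2*(∫ g, f2 g ∂μ) + c3*(∫ g, f3 g ∂μ)
      + c4*(∫ g, f4 g ∂μ) + c5*(∫ g, f5 g ∂μ) + c6*(∫ g, f6 g ∂μ) + c7*(∫ g, f7 g ∂μ)
      + c8*(∫ g, f8 g ∂μ) + c9*(∫ g, f9 g ∂μ) := by
  have e1 : ∫ g, F g ∂μ
      = ∫ g, ((c1*f1 g + c2*f2 g + c3*f3 g + c4*f4 g + c5*f5 g)
          + (c6*f6 g + c7*f7 g + c8*f8 g + c9*f9 g)) ∂μ :=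
    integral_congr_ae (ae_of_all _ fun g => by rw [hF g]; ring)
  have i15 : Integrable (fun g => c1*f1 g + c2*f2 g + c3*f3 g + c4*f4 g + c5*f5 g) μ :=
    ((((h1.const_mul c1).add (h2.const_mul c2)).add (h3.const_mul c3)).add
      (h4.const_mul c4)).add (h5.const_mul c5)
  have i69 : Integrable (fun g => c6*f6 g + c7*f7 g + c8*f8 g + c9*f9 g) μ :=
    (((h6.const_mul c6).add (h7.const_mul c7)).add (h8.const_mul c8)).add (h9.const_mul c9)
  rw [e1, integral_add i15 i69]
  have e2 := int_split5 (μ := μ) _ f1 f2 f3 f4 f5 c1 c2 c3 c4 c5 h1 h2 h3 h4 h5 (fun g => rfl)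
  have e3 := int_split5 (μ := μ) (fun g => c6*f6 g + c7*f7 g + c8*f8 g + c9*f9 g)
    f6 f7 f8 f9 f9 c6 c7 c8 c9 0 h6 h7 h8 h9 h9 (fun g => by ring)
  rw [e2, e3]; ring

lemma one_eq_int : (1:ℝ) = ∫ _g : OG N, (1:ℝ) ∂μ := by simp

lemma Ykk (hN : 2 ≤ N) {a b : Fin N} (hab : a ≠ b) (k : Fin N) :
    ∫ g, e g a k * e g a k * e g b k * e g b k ∂μ = 1/((N:ℝ)*((N:ℝ)+2)) := by
  set X := ∫ g, e g a k * e g a k * e g a k * e g a k ∂μ with hX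
  set Y := ∫ g, e g a k * e g a k * e g b k * e g b k ∂μ with hY
  have hdiag : ∀ c : Fin N, ∫ g, e g c k * e g c k * e g c k * e g c k ∂μ = X := by
    intro c
    have h := perm_step (μ := μ) (Equiv.swap c a) a a a a k k k k
    rwa [Equiv.swap_apply_right] at h
  have hoff : ∀ c d : Fin N, c ≠ d → ∫ g, e g c k * e g c k * e g d k * e g d k ∂μ = Y := by
    intro c d hcd
    obtain ⟨σ, h1, h2⟩ := exists_perm hcd hab
    have h := perm_step (μ := μ) σ a a b b k k k k
    rwa [h1, h2] at h
  have key1 : (N:ℝ)*X + (N:ℝ)*((N:ℝ)-1)*Y = 1 := by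
    have hpt : ∀ g : OG N,
        (∑ c : Fin N, ∑ d : Fin N, e g c k * e g c k * e g d k * e g d k) = 1 := by
      intro g
      calc ∑ c : Fin N, ∑ d : Fin N, e g c k * e g c k * e g d k * e g d k
          = (∑ c, e g c k * e g c k) * (∑ d, e g d k * e g d k) := by
            rw [Finset.sum_mul_sum]
            exact Finset.sum_congr rfl fun c _ => Finset.sum_congr rfl fun d _ => by ring
        _ = 1 := by rw [sum_sq]; norm_num
    have step : (1:ℝ) = ∑ c : Fin N, ∑ d : Fin N,
        ∫ g, e g c k * e g c k * e g d k * e g d k ∂μ := by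
      calc (1:ℝ) = ∫ _g : OG N, (1:ℝ) ∂μ := one_eq_int
        _ = ∫ g, ∑ c : Fin N, ∑ d : Fin N, e g c k * e g c k * e g d k * e g d k ∂μ :=
            integral_congr_ae (ae_of_all _ fun g => (hpt g).symm)
        _ = ∑ c : Fin N, ∫ g, ∑ d : Fin N, e g c k * e g c k * e g d k * e g d k ∂μ :=
            integral_finset_sum _ (fun c _ => integrable_finset_sum _
              (fun d _ => int4 c c d d k k k k))
        _ = ∑ c : Fin N, ∑ d : Fin N, ∫ g, e g c k * e g c k * e g d k * e g d k ∂μ :=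
            Finset.sum_congr rfl fun c _ => integral_finset_sum _
              (fun d _ => int4 c c d d k k k k)
    have step2 : ∑ c : Fin N, ∑ d : Fin N,
        (∫ g, e g c k * e g c k * e g d k * e g d k ∂μ)
        = ∑ c : Fin N, ∑ d : Fin N, (if c = d then X else Y) := by
      refine Finset.sum_congr rfl fun c _ => Finset.sum_congr rfl fun d _ => ?_
      split_ifs with hcd
      · subst hcd; exact hdiag c
      · exact hoff c d hcd
    rw [step2, sum_diag_offdiag] at step
    linarith
  have key2 : X = 3*Y := by
    have hA : X = ∫ g, (rc*(e g a k + e g b k)) * (rc*(e g a k + e g b k))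
        * (rc*(e g a k + e g b k)) * (rc*(e g a k + e g b k)) ∂μ := by
      rw [hX, ← integral_mul_left_eq_self
        (fun g : OG N => e g a k * e g a k * e g a k * e g a k) (mkO _ (rot_orth hab))]
      exact integral_congr_ae (ae_of_all _ fun g => by simp [e_rot hab])
    have hB : X = ∫ g, (rc*(e g a k - e g b k)) * (rc*(e g a k - e g b k))
        * (rc*(e g a k - e g b k)) * (rc*(e g a k - e g b k)) ∂μ := by
      rw [← hdiag b, ← integral_mul_left_eq_self
        (fun g : OG N => e g b k * e g b k * e g b k * e g b k) (mkO _ (rot_orth hab))]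
      exact integral_congr_ae (ae_of_all _ fun g => by simp [e_rot hab, Ne.symm hab])
    have hAe : ∫ g, (rc*(e g a k + e g b k)) * (rc*(e g a k + e g b k))
        * (rc*(e g a k + e g b k)) * (rc*(e g a k + e g b k)) ∂μ
        = (1/4)*(∫ g, e g a k * e g a k * e g a k * e g a k ∂μ)
          + 1*(∫ g, e g a k * e g a k * e g a k * e g b k ∂μ)
          + (3/2)*(∫ g, e g a k * e g a k * e g b k * e g b k ∂μ)
          + 1*(∫ g, e g a k * e g b k * e g b k * e g b k ∂μ)
          + (1/4)*(∫ g, e g b k * e g b k * e g b k * e g b k ∂μ) :=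
      int_split5 _ _ _ _ _ _ (1/4) 1 (3/2) 1 (1/4)
        (int4 a a a a k k k k) (int4 a a a b k k k k) (int4 a a b b k k k k)
        (int4 a b b b k k k k) (int4 b b b b k k k k)
        (fun g => by
          linear_combination (rc*rc + 1/2) * (e g a k + e g b k)^4 * rc_mul_rc)
    have hBe : ∫ g, (rc*(e g a k - e g b k)) * (rc*(e g a k - e g b k))
        * (rc*(e g a k - e g b k)) * (rc*(e g a k - e g b k)) ∂μ
        = (1/4)*(∫ g, e g a k * e g a k * e g a k * e g a k ∂μ)
          + (-1)*(∫ g, e g a k * e g a k * e g a k * e g b k ∂μ)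
          + (3/2)*(∫ g, e g a k * e g a k * e g b k * e g b k ∂μ)
          + (-1)*(∫ g, e g a k * e g b k * e g b k * e g b k ∂μ)
          + (1/4)*(∫ g, e g b k * e g b k * e g b k * e g b k ∂μ) :=
      int_split5 _ _ _ _ _ _ (1/4) (-1) (3/2) (-1) (1/4)
        (int4 a a a a k k k k) (int4 a a a b k k k k) (int4 a a b b k k k k)
        (int4 a b b b k k k k) (int4 b b b b k k k k)
        (fun g => by
          linear_combination (rc*rc + 1/2) * (e g a k - e g b k)^4 * rc_mul_rc)
    linarith [hA, hB, hAe, hBe, hdiag b, hX, hY]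
  have hN2 : (2:ℝ) ≤ (N:ℝ) := by exact_mod_cast hN
  rw [eq_div_iff (by nlinarith : (N:ℝ)*((N:ℝ)+2) ≠ 0)]
  linear_combination key1 - (N:ℝ)*key2

lemma Zkq (hN : 2 ≤ N) {a b : Fin N} (hab : a ≠ b) {k q : Fin N} (hkq : k ≠ q) :
    ∫ g, e g a k * e g a q * e g b k * e g b q ∂μ
      = -1/((N:ℝ)*((N:ℝ)-1)*((N:ℝ)+2)) := by
  set W := ∫ g, e g a k * e g a q * e g a k * e g a q ∂μ with hW
  set V := ∫ g, e g a k * e g a k * e g b q * e g b q ∂μ with hV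
  set Z := ∫ g, e g a k * e g a q * e g b k * e g b q ∂μ with hZ
  have hdiagW : ∀ c : Fin N, ∫ g, e g c k * e g c q * e g c k * e g c q ∂μ = W := by
    intro c
    have h := perm_step (μ := μ) (Equiv.swap c a) a a a a k q k q
    rwa [Equiv.swap_apply_right] at h
  have hoffZ : ∀ c d : Fin N, c ≠ d → ∫ g, e g c k * e g c q * e g d k * e g d q ∂μ = Z := by
    intro c d hcd
    obtain ⟨σ, h1, h2⟩ := exists_perm hcd hab
    have h := perm_step (μ := μ) σ a a b b k q k q
    rwa [h1, h2] at h
  have hoffV : ∀ c d : Fin N, c ≠ d → ∫ g, e g c k * e g c k * e g d q * e g d q ∂μ = V := by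
    intro c d hcd
    obtain ⟨σ, h1, h2⟩ := exists_perm hcd hab
    have h := perm_step (μ := μ) σ a a b b k k q q
    rwa [h1, h2] at h
  have hdiagW2 : ∀ c : Fin N, ∫ g, e g c k * e g c k * e g c q * e g c q ∂μ = W := by
    intro c
    have h := perm_step (μ := μ) (Equiv.swap c a) a a a a k k q q
    rw [Equiv.swap_apply_right] at h
    rw [h, hW]
    exact integral_congr_ae (ae_of_all _ fun g => by ring)
  have keyO : (N:ℝ)*W + (N:ℝ)*((N:ℝ)-1)*Z = 0 := by
    have hpt : ∀ g : OG N,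
        (∑ c : Fin N, ∑ d : Fin N, e g c k * e g c q * e g d k * e g d q) = 0 := by
      intro g
      calc ∑ c : Fin N, ∑ d : Fin N, e g c k * e g c q * e g d k * e g d q
          = (∑ c, e g c k * e g c q) * (∑ d, e g d k * e g d q) := by
            rw [Finset.sum_mul_sum]
            exact Finset.sum_congr rfl fun c _ => Finset.sum_congr rfl fun d _ => by ring
        _ = 0 := by rw [sum_orth g hkq]; ring
    have step : (0:ℝ) = ∑ c : Fin N, ∑ d : Fin N,
        ∫ g, e g c k * e g c q * e g d k * e g d q ∂μ := by
      calc (0:ℝ) = ∫ _g : OG N, (0:ℝ) ∂μ := by simp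
        _ = ∫ g, ∑ c : Fin N, ∑ d : Fin N, e g c k * e g c q * e g d k * e g d q ∂μ :=
            integral_congr_ae (ae_of_all _ fun g => (hpt g).symm)
        _ = ∑ c : Fin N, ∫ g, ∑ d : Fin N, e g c k * e g c q * e g d k * e g d q ∂μ :=
            integral_finset_sum _ (fun c _ => integrable_finset_sum _
              (fun d _ => int4 c c d d k q k q))
        _ = ∑ c : Fin N, ∑ d : Fin N, ∫ g, e g c k * e g c q * e g d k * e g d q ∂μ :=
            Finset.sum_congr rfl fun c _ => integral_finset_sum _
              (fun d _ => int4 c c d d k q k q)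
    have step2 : ∑ c : Fin N, ∑ d : Fin N,
        (∫ g, e g c k * e g c q * e g d k * e g d q ∂μ)
        = ∑ c : Fin N, ∑ d : Fin N, (if c = d then W else Z) := by
      refine Finset.sum_congr rfl fun c _ => Finset.sum_congr rfl fun d _ => ?_
      split_ifs with hcd
      · subst hcd; exact hdiagW c
      · exact hoffZ c d hcd
    rw [step2, sum_diag_offdiag] at step
    linarith
  have keyP : (N:ℝ)*W + (N:ℝ)*((N:ℝ)-1)*V = 1 := by
    have hpt : ∀ g : OG N,
        (∑ c : Fin N, ∑ d : Fin N, e g c k * e g c k * e g d q * e g d q) = 1 := by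
      intro g
      calc ∑ c : Fin N, ∑ d : Fin N, e g c k * e g c k * e g d q * e g d q
          = (∑ c, e g c k * e g c k) * (∑ d, e g d q * e g d q) := by
            rw [Finset.sum_mul_sum]
            exact Finset.sum_congr rfl fun c _ => Finset.sum_congr rfl fun d _ => by ring
        _ = 1 := by rw [sum_sq, sum_sq]; ring
    have step : (1:ℝ) = ∑ c : Fin N, ∑ d : Fin N,
        ∫ g, e g c k * e g c k * e g d q * e g d q ∂μ := by
      calc (1:ℝ) = ∫ _g : OG N, (1:ℝ) ∂μ := one_eq_int
        _ = ∫ g, ∑ c : Fin N, ∑ d : Fin N, e g c k * e g c k * e g d q * e g d q ∂μ :=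
            integral_congr_ae (ae_of_all _ fun g => (hpt g).symm)
        _ = ∑ c : Fin N, ∫ g, ∑ d : Fin N, e g c k * e g c k * e g d q * e g d q ∂μ :=
            integral_finset_sum _ (fun c _ => integrable_finset_sum _
              (fun d _ => int4 c c d d k k q q))
        _ = ∑ c : Fin N, ∑ d : Fin N, ∫ g, e g c k * e g c k * e g d q * e g d q ∂μ :=
            Finset.sum_congr rfl fun c _ => integral_finset_sum _
              (fun d _ => int4 c c d d k k q q)
    have step2 : ∑ c : Fin N, ∑ d : Fin N,
        (∫ g, e g c k * e g c k * e g d q * e g d q ∂μ)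
        = ∑ c : Fin N, ∑ d : Fin N, (if c = d then W else V) := by
      refine Finset.sum_congr rfl fun c _ => Finset.sum_congr rfl fun d _ => ?_
      split_ifs with hcd
      · subst hcd; exact hdiagW2 c
      · exact hoffV c d hcd
    rw [step2, sum_diag_offdiag] at step
    linarith
  have keyR : W = V + 2*Z := by
    have hA : W = ∫ g, (rc*(e g a k + e g b k)) * (rc*(e g a q + e g b q))
        * (rc*(e g a k + e g b k)) * (rc*(e g a q + e g b q)) ∂μ := by
      rw [hW, ← integral_mul_left_eq_self
        (fun g : OG N => e g a k * e g a q * e g a k * e g a q) (mkO _ (rot_orth hab))]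
      exact integral_congr_ae (ae_of_all _ fun g => by simp [e_rot hab])
    have hB : W = ∫ g, (rc*(e g a k - e g b k)) * (rc*(e g a q - e g b q))
        * (rc*(e g a k - e g b k)) * (rc*(e g a q - e g b q)) ∂μ := by
      rw [← hdiagW b, ← integral_mul_left_eq_self
        (fun g : OG N => e g b k * e g b q * e g b k * e g b q) (mkO _ (rot_orth hab))]
      exact integral_congr_ae (ae_of_all _ fun g => by simp [e_rot hab, Ne.symm hab])
    have hAe : ∫ g, (rc*(e g a k + e g b k)) * (rc*(e g a q + e g b q))
        * (rc*(e g a k + e g b k)) * (rc*(e g a q + e g b q)) ∂μ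
        = (1/4)*(∫ g, e g a k * e g a q * e g a k * e g a q ∂μ)
          + (1/2)*(∫ g, e g a k * e g a q * e g a k * e g b q ∂μ)
          + (1/4)*(∫ g, e g a k * e g a k * e g b q * e g b q ∂μ)
          + (1/2)*(∫ g, e g a k * e g b k * e g a q * e g a q ∂μ)
          + 1*(∫ g, e g a k * e g a q * e g b k * e g b q ∂μ)
          + (1/2)*(∫ g, e g a k * e g b k * e g b q * e g b q ∂μ)
          + (1/4)*(∫ g, e g b k * e g b k * e g a q * e g a q ∂μ)
          + (1/2)*(∫ g, e g b k * e g b k * e g a q * e g b q ∂μ)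
          + (1/4)*(∫ g, e g b k * e g b q * e g b k * e g b q ∂μ) :=
      int_split9 _ _ _ _ _ _ _ _ _ _ (1/4) (1/2) (1/4) (1/2) 1 (1/2) (1/4) (1/2) (1/4)
        (int4 a a a a k q k q) (int4 a a a b k q k q) (int4 a a b b k k q q)
        (int4 a b a a k k q q) (int4 a a b b k q k q) (int4 a b b b k k q q)
        (int4 b b a a k k q q) (int4 b b a b k k q q) (int4 b b b b k q k q)
        (fun g => by
          linear_combination (rc*rc + 1/2) * ((e g a k + e g b k)^2 * (e g a q + e g b q)^2)
            * rc_mul_rc)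
    have hBe : ∫ g, (rc*(e g a k - e g b k)) * (rc*(e g a q - e g b q))
        * (rc*(e g a k - e g b k)) * (rc*(e g a q - e g b q)) ∂μ
        = (1/4)*(∫ g, e g a k * e g a q * e g a k * e g a q ∂μ)
          + (-(1/2))*(∫ g, e g a k * e g a q * e g a k * e g b q ∂μ)
          + (1/4)*(∫ g, e g a k * e g a k * e g b q * e g b q ∂μ)
          + (-(1/2))*(∫ g, e g a k * e g b k * e g a q * e g a q ∂μ)
          + 1*(∫ g, e g a k * e g a q * e g b k * e g b q ∂μ)
          + (-(1/2))*(∫ g, e g a k * e g b k * e g b q * e g b q ∂μ)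
          + (1/4)*(∫ g, e g b k * e g b k * e g a q * e g a q ∂μ)
          + (-(1/2))*(∫ g, e g b k * e g b k * e g a q * e g b q ∂μ)
          + (1/4)*(∫ g, e g b k * e g b q * e g b k * e g b q ∂μ) :=
      int_split9 _ _ _ _ _ _ _ _ _ _ (1/4) (-(1/2)) (1/4) (-(1/2)) 1 (-(1/2)) (1/4) (-(1/2)) (1/4)
        (int4 a a a a k q k q) (int4 a a a b k q k q) (int4 a a b b k k q q)
        (int4 a b a a k k q q) (int4 a a b b k q k q) (int4 a b b b k k q q)
        (int4 b b a a k k q q) (int4 b b a b k k q q) (int4 b b b b k q k q)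
        (fun g => by
          linear_combination (rc*rc + 1/2) * ((e g a k - e g b k)^2 * (e g a q - e g b q)^2)
            * rc_mul_rc)
    have hVba : ∫ g, e g b k * e g b k * e g a q * e g a q ∂μ = V :=
      hoffV b a (Ne.symm hab)
    linarith [hA, hB, hAe, hBe, hdiagW b, hW, hV, hZ, hVba]
  have hN2 : (2:ℝ) ≤ (N:ℝ) := by exact_mod_cast hN
  have h1 : (0:ℝ) < (N:ℝ) := by linarith
  have h2 : (0:ℝ) < (N:ℝ)-1 := by linarith
  have h3 : (0:ℝ) < (N:ℝ)+2 := by linarith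
  rw [eq_div_iff (by positivity : (N:ℝ)*((N:ℝ)-1)*((N:ℝ)+2) ≠ 0)]
  linear_combination (N:ℝ)*keyO - keyP - (N:ℝ)*((N:ℝ)-1)*keyR

lemma find_r {m t m' t' : Fin N} (h : (m,t) ≠ (m',t'))
    (hC : ¬((m = t ∧ m' = t' ∧ m ≠ m') ∨ (m = t' ∧ t = m' ∧ m ≠ t))) :
    ∃ r, sg r m * sg r t * sg r m' * sg r t' = -1 := by
  push_neg at hC
  obtain ⟨hC1, hC2⟩ := hC
  by_cases h1 : m = t
  · by_cases h2 : m' = t'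
    · have h3 : m = m' := hC1 h1 h2
      have h4 : t = t' := (h1.symm.trans h3).trans h2
      exact absurd (by rw [h3, h4] : (m,t) = (m',t')) h
    · by_cases h3 : m' = m
      · have c1 : ¬(m = t') := fun hh => h2 (h3.trans hh)
        have c2 : ¬(t = t') := fun hh => c1 (h1.trans hh)
        refine ⟨t', ?_⟩
        simp [sg, c1, c2, h2]
      · refine ⟨m', ?_⟩
        have c1 : ¬(m = m') := fun hh => h3 hh.symm
        have c2 : ¬(t = m') := fun hh => h3 (hh.symm.trans h1.symm)
        have c3 : ¬(t' = m') := fun hh => h2 hh.symm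
        simp [sg, c1, c2, c3]
  · by_cases h2 : m' = t'
    · by_cases h3 : m = m'
      · refine ⟨t, ?_⟩
        have c3 : ¬(m' = t) := fun hh => h1 (h3.trans hh)
        have c4 : ¬(t' = t) := fun hh => h1 ((h3.trans h2).trans hh)
        simp [sg, h1, c3, c4]
      · refine ⟨m, ?_⟩
        have c2 : ¬(t = m) := fun hh => h1 hh.symm
        have c3 : ¬(m' = m) := fun hh => h3 hh.symm
        have c4 : ¬(t' = m) := fun hh => h3 (h2.trans hh).symm
        simp [sg, c2, c3, c4]
    · by_cases h4 : m = t'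
      · have ht : ¬(t = m') := fun hh => h1 (hC2 h4 hh)
        refine ⟨t, ?_⟩
        have c3 : ¬(m' = t) := fun hh => ht hh.symm
        have c4 : ¬(t' = t) := fun hh => h1 (h4.trans hh)
        simp [sg, h1, c3, c4]
      · by_cases h5 : m = m'
        · have htt' : ¬(t = t') := fun hh => h (by rw [h5, hh])
          refine ⟨t, ?_⟩
          have c3 : ¬(m' = t) := fun hh => h1 (h5.trans hh)
          have c4 : ¬(t' = t) := fun hh => htt' hh.symm
          simp [sg, h1, c3, c4]
        · refine ⟨m, ?_⟩
          have c2 : ¬(t = m) := fun hh => h1 hh.symm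
          have c3 : ¬(m' = m) := fun hh => h5 hh.symm
          have c4 : ¬(t' = m) := fun hh => h4 hh.symm
          simp [sg, c2, c3, c4]

end WgAux

open WgAux

/-- (Weingarten calculus, degree 4, mixed terms.)  Let `μ` be the Haar
probability measure on the orthogonal group `O(N)`, `N ≥ 2`, and let
`m, m', t, t', k, q ∈ [N]` with `(m, t) ≠ (m', t')`.  Then
`∫ g_{mk} g_{tq} g_{m'k} g_{t'q} dμ(g)` equals `1/(N(N+2))` if `k = q` and
(`m = t, m' = t', m ≠ m'` or `m = t', t = m', m ≠ t`); `−1/(N(N−1)(N+2))` if `k ≠ q` and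
(`m = t, m' = t', m ≠ m'` or `m = t', t = m', m ≠ t`); and `0` otherwise. -/
theorem haar_integral_orthogonalGroup_degree_four_mixed
    (N : ℕ) (hN : 2 ≤ N)
    [MeasurableSpace (Matrix.orthogonalGroup (Fin N) ℝ)]
    [BorelSpace (Matrix.orthogonalGroup (Fin N) ℝ)]
    (μ : Measure (Matrix.orthogonalGroup (Fin N) ℝ))
    [IsProbabilityMeasure μ] [μ.IsMulLeftInvariant]
    (m m' t t' k q : Fin N) (h : (m, t) ≠ (m', t')) :
    ∫ g : Matrix.orthogonalGroup (Fin N) ℝ,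
        (g : Matrix (Fin N) (Fin N) ℝ) m k * (g : Matrix (Fin N) (Fin N) ℝ) t q *
          (g : Matrix (Fin N) (Fin N) ℝ) m' k * (g : Matrix (Fin N) (Fin N) ℝ) t' q ∂μ =
      if k = q then
        (if (m = t ∧ m' = t' ∧ m ≠ m') ∨ (m = t' ∧ t = m' ∧ m ≠ t) then
          1 / ((N : ℝ) * (N + 2))
        else 0)
      else
        (if (m = t ∧ m' = t' ∧ m ≠ m') ∨ (m = t' ∧ t = m' ∧ m ≠ t) then
          -1 / ((N : ℝ) * ((N : ℝ) - 1) * (N + 2))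
        else 0) := by
  simp only [e_def]
  by_cases hC : (m = t ∧ m' = t' ∧ m ≠ m') ∨ (m = t' ∧ t = m' ∧ m ≠ t)
  · rcases hC with ⟨h1, h2, h3⟩ | ⟨h1, h2, h3⟩
    · subst h1; subst h2
      by_cases hkq : k = q
      · subst hkq
        rw [if_pos rfl, if_pos (Or.inl ⟨rfl, rfl, h3⟩)]
        exact Ykk hN h3 k
      · rw [if_neg hkq, if_pos (Or.inl ⟨rfl, rfl, h3⟩)]
        exact Zkq hN h3 hkq
    · subst h1; subst h2
      have hre : ∫ g : OG N, e g m k * e g t q * e g t k * e g m q ∂μ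
          = ∫ g : OG N, e g m k * e g m q * e g t k * e g t q ∂μ :=
        integral_congr_ae (ae_of_all _ fun g => by ring)
      rw [hre]
      by_cases hkq : k = q
      · subst hkq
        rw [if_pos rfl, if_pos (Or.inr ⟨rfl, rfl, h3⟩)]
        exact Ykk hN h3 k
      · rw [if_neg hkq, if_pos (Or.inr ⟨rfl, rfl, h3⟩)]
        exact Zkq hN h3 hkq
  · obtain ⟨r, hr⟩ := find_r h hC
    simp only [if_neg hC, ite_self]
    exact sign_zero m t m' t' k q k q r hr
end
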